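/- Let N be a 1-nested phylogenetic network on a finite set X with |X| ≥ 2. Then at least one of the four reductions C, C̄, H, H̄ may be applied to N; that is, N has a non-isolated cherry, an isolated cherry, a non-isolated cactus, or an isolated cactus. -/

import Mathlib

/-!
Common formalization infrastructure for 1-nested phylogenetic networks and trinets
(Huber–Moulton, "Encoding and Constructing 1-Nested Phylogenetic Networks with Trinets").

Networks are modelled concretely: the vertex set is a finite set of natural numbers,
arcs are a finite set of ordered pairs (so there are no multiple arcs), and leaves are
labelled by themselves (i.e. the leaf set of a network on `X` is literally `X`).
-/

noncomputable section

/-- A finite directed graph with vertex set `verts ⊆ ℕ`, arc set `arcs`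
(ordered pairs, no multiple arcs) and a distinguished root vertex. -/
structure Net where
  verts : Finset ℕ
  arcs : Finset (ℕ × ℕ)
  root : ℕ

namespace Net

/-- The arc relation of `N`. -/
def ArcRel (N : Net) (u v : ℕ) : Prop := (u, v) ∈ N.arcs

/-- `v` is reachable from `u` by a directed path in `N`. -/
def Reach (N : Net) (u v : ℕ) : Prop := Relation.ReflTransGen N.ArcRel u v

/-- The indegree of a vertex. -/
def indeg (N : Net) (v : ℕ) : ℕ := (N.arcs.filter fun a => a.2 = v).card

/-- The outdegree of a vertex. -/
def outdeg (N : Net) (v : ℕ) : ℕ := (N.arcs.filter fun a => a.1 = v).card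

/-- A leaf is a vertex of indegree 1 and outdegree 0. -/
def IsLeaf (N : Net) (v : ℕ) : Prop := N.indeg v = 1 ∧ N.outdeg v = 0

/-- `N` is a phylogenetic network on the leaf set `X`: it is a rooted DAG
(no loops and no multiple arcs, a unique source, namely the root), its set of
leaves is exactly `X`, every tree vertex (a non-root interior vertex of
indegree one) has outdegree at least 2, and every hybrid vertex (a vertex of
indegree at least 2) has outdegree at least 1. -/
def IsPhyloNet (N : Net) (X : Finset ℕ) : Prop :=
  (∀ a ∈ N.arcs, a.1 ∈ N.verts ∧ a.2 ∈ N.verts) ∧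
  (∀ v : ℕ, ¬ Relation.TransGen N.ArcRel v v) ∧
  N.root ∈ N.verts ∧ N.indeg N.root = 0 ∧
  (∀ v ∈ N.verts, N.indeg v = 0 → v = N.root) ∧
  X ⊆ N.verts ∧ (∀ v ∈ N.verts, (N.IsLeaf v ↔ v ∈ X)) ∧
  (∀ v ∈ N.verts, v ≠ N.root → N.outdeg v ≠ 0 → N.indeg v = 1 → 2 ≤ N.outdeg v) ∧
  (∀ v ∈ N.verts, 2 ≤ N.indeg v → 1 ≤ N.outdeg v)

/-- Adjacency in the (simple) underlying undirected graph of `N`. -/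
def Adj (N : Net) (u v : ℕ) : Prop := (u, v) ∈ N.arcs ∨ (v, u) ∈ N.arcs

/-- `C` is (the vertex set of) a cycle in the underlying graph of `N`:
a set of `n ≥ 3` vertices that can be ordered cyclically so that consecutive
vertices are adjacent. -/
def IsCycle (N : Net) (C : Finset ℕ) : Prop :=
  ∃ n : ℕ, ∃ hn : 3 ≤ n, ∃ f : Fin n → ℕ,
    Function.Injective f ∧ Finset.image f Finset.univ = C ∧
    ∀ i : Fin n, N.Adj (f i) (f ⟨(i.val + 1) % n, Nat.mod_lt _ (by omega)⟩)

/-- `N` is 1-nested: every pair of distinct cycles of the underlying graph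
meets in at most one vertex. -/
def OneNested (N : Net) : Prop :=
  ∀ C₁ C₂ : Finset ℕ, N.IsCycle C₁ → N.IsCycle C₂ → C₁ ≠ C₂ → (C₁ ∩ C₂).card ≤ 1

/-- `p` is a (nonempty) directed path in `N`, recorded as its list of vertices. -/
def IsPath (N : Net) (p : List ℕ) : Prop :=
  p ≠ [] ∧ List.Chain' N.ArcRel p ∧ ∀ u ∈ p, u ∈ N.verts

/-- `p` is a directed path in `N` from `u` to `v`. -/
def IsPathFromTo (N : Net) (u v : ℕ) (p : List ℕ) : Prop :=
  N.IsPath p ∧ p.head? = some u ∧ p.getLast? = some v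

/-- `v` lies on every directed path in `N` from the root to every element of `Y`. -/
def OnAllRootPaths (N : Net) (Y : Finset ℕ) (v : ℕ) : Prop :=
  ∀ y ∈ Y, ∀ p : List ℕ, N.IsPathFromTo N.root y p → v ∈ p

/-- `v = v(Y)`: the last vertex (w.r.t. the order induced by the arcs) not in `Y`
lying on every directed path from the root to every element of `Y`. -/
def IsLCA (N : Net) (Y : Finset ℕ) (v : ℕ) : Prop :=
  v ∈ N.verts ∧ v ∉ Y ∧ N.OnAllRootPaths Y v ∧
  ∀ w ∈ N.verts, w ∉ Y → N.OnAllRootPaths Y w → N.Reach w v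

/-- `v = v*_N`: there exist distinct leaves `x, y ∈ X` with `v = v({x,y})`, and for every
pair of distinct leaves `u, w ∈ X`, either `v({u,w}) = v` or `v({u,w})` is
reachable from `v`. -/
def IsVStar (N : Net) (X : Finset ℕ) (v : ℕ) : Prop :=
  (∃ x ∈ X, ∃ y ∈ X, x ≠ y ∧ N.IsLCA {x, y} v) ∧
  ∀ u ∈ X, ∀ w ∈ X, u ≠ w →
    ∀ t : ℕ, N.IsLCA {u, w} t → t = v ∨ N.Reach v t

/-- `N` is recoverable: the root equals `v*_N`. -/
def Recoverable (N : Net) (X : Finset ℕ) : Prop := N.IsVStar X N.root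

/-- Connectivity (in the underlying graph) within the vertex set `S`. -/
def ConnOn (N : Net) (S : Finset ℕ) (a b : ℕ) : Prop :=
  Relation.ReflTransGen (fun u w => u ∈ S ∧ w ∈ S ∧ N.Adj u w) a b

/-- `v` is a cut vertex of `N`: deleting `v` disconnects the underlying graph. -/
def IsCutVertex (N : Net) (v : ℕ) : Prop :=
  v ∈ N.verts ∧ ∃ a ∈ N.verts.erase v, ∃ b ∈ N.verts.erase v,
    ¬ N.ConnOn (N.verts.erase v) a b

/-- `v` is a separating vertex of `N` (w.r.t. leaf set `X`): a cut vertex such that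
some connected component of `N` minus `v` contains no leaf. -/
def IsSepVertex (N : Net) (X : Finset ℕ) (v : ℕ) : Prop :=
  N.IsCutVertex v ∧ ∃ a ∈ N.verts.erase v,
    ∀ b ∈ N.verts.erase v, N.ConnOn (N.verts.erase v) a b → b ∉ X

open scoped Classical in
/-- The subnetwork of `N` which is the union of all directed paths from `v`
to elements of `Y`, rooted at `v`. -/
def restrictTo (N : Net) (v : ℕ) (Y : Finset ℕ) : Net :=
  { verts := N.verts.filter fun w => N.Reach v w ∧ ∃ y ∈ Y, N.Reach w y
    arcs := N.arcs.filter fun a => N.Reach v a.1 ∧ ∃ y ∈ Y, N.Reach a.2 y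
    root := v }

/-- One suppression step: suppress a vertex `w` of indegree 1 and outdegree 1
(its unique in-arc `(u,w)` and out-arc `(w,x)` are replaced by the arc `(u,x)`;
since arc sets are plain finite sets, any multiple arc arising this way is
automatically merged). -/
def SuppStep (N M : Net) : Prop :=
  ∃ u w x : ℕ, (u, w) ∈ N.arcs ∧ (w, x) ∈ N.arcs ∧
    N.indeg w = 1 ∧ N.outdeg w = 1 ∧
    M.verts = N.verts.erase w ∧
    M.arcs = insert (u, x) ((N.arcs.erase (u, w)).erase (w, x)) ∧
    M.root = N.root

/-- `M` is the result of repeatedly suppressing indegree-1-outdegree-1 vertices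
of `N` (merging multiple arcs) until none are left. -/
def Suppresses (N M : Net) : Prop :=
  Relation.ReflTransGen SuppStep N M ∧
  ∀ w ∈ M.verts, ¬ (M.indeg w = 1 ∧ M.outdeg w = 1)

/-- Isomorphism of networks restricting to the identity on `X`. -/
def IsIsoOn (N M : Net) (X : Finset ℕ) : Prop :=
  ∃ f : ℕ → ℕ, Set.BijOn f ↑N.verts ↑M.verts ∧
    (∀ u ∈ N.verts, ∀ w ∈ N.verts, ((u, w) ∈ N.arcs ↔ (f u, f w) ∈ M.arcs)) ∧
    f N.root = M.root ∧ ∀ x ∈ X, f x = x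

/-- `T` is (a copy, up to isomorphism fixing the leaves, of) the trinet `N_Y`
displayed by `N` on `Y`: take the union of all directed paths from `v(Y)` to the
elements of `Y` and repeatedly suppress indegree-1-outdegree-1 vertices and
multiple arcs until a trinet on `Y` is obtained. -/
def Displays (N : Net) (Y : Finset ℕ) (T : Net) : Prop :=
  ∃ v : ℕ, N.IsLCA Y v ∧ ∃ T₀ : Net, Suppresses (N.restrictTo v Y) T₀ ∧ T₀.IsIsoOn T Y

/-- The arcs of `N` having both endpoints in `C`. -/
def arcsIn (N : Net) (C : Finset ℕ) : Finset (ℕ × ℕ) :=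
  N.arcs.filter fun a => a.1 ∈ C ∧ a.2 ∈ C

/-- `Z(C)`: the vertices of `C` that are tails of two distinct arcs of `N` having
both endpoints in `C`. -/
def ZSet (N : Net) (C : Finset ℕ) : Finset ℕ :=
  C.filter fun v => ∃ a ∈ N.arcsIn C, ∃ b ∈ N.arcsIn C, a ≠ b ∧ a.1 = v ∧ b.1 = v

/-- `h = h_C`: a vertex of `C` having two of its incoming arcs among the arcs of `N`
with both endpoints in `C`. -/
def IsHybridOfCycle (N : Net) (C : Finset ℕ) (h : ℕ) : Prop :=
  h ∈ C ∧ ∃ a ∈ N.arcsIn C, ∃ b ∈ N.arcsIn C, a ≠ b ∧ a.2 = h ∧ b.2 = h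

/-- A tree vertex: an interior vertex of indegree 1 (interior: outdegree nonzero;
indegree 1 excludes the root). -/
def IsTreeVert (N : Net) (v : ℕ) : Prop := N.indeg v = 1 ∧ 1 ≤ N.outdeg v

/-- `w = w(l)`: the vertex distinct from `l` lying on every directed path from the
root to `l` which is a hybrid vertex and from which there is a unique directed path
to `l` all of whose interior vertices are tree vertices. -/
def IsWVert (N : Net) (l w : ℕ) : Prop :=
  w ∈ N.verts ∧ w ≠ l ∧ (∀ p : List ℕ, N.IsPathFromTo N.root l p → w ∈ p) ∧
  2 ≤ N.indeg w ∧
  ∃! p : List ℕ, N.IsPathFromTo w l p ∧ ∀ u ∈ p, u ≠ w → u ≠ l → N.IsTreeVert u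

/-- The underlying graph of `N` is a tree (connected and without cycles);
together with `IsPhyloNet` this says that `N` is a rooted phylogenetic tree. -/
def IsTreeNet (N : Net) : Prop :=
  (∀ a ∈ N.verts, ∀ b ∈ N.verts, N.ConnOn N.verts a b) ∧
  ∀ C : Finset ℕ, ¬ N.IsCycle C

/-- `v = v_S` witnesses that `S` is a cherry of `N` on `X`: there is an arc from `v`
to every element of `S` and no arc from `v` to any element of `X - S`. -/
def IsCherryVert (N : Net) (X S : Finset ℕ) (v : ℕ) : Prop :=
  v ∈ N.verts ∧ (∀ x ∈ S, (v, x) ∈ N.arcs) ∧ ∀ x ∈ X, x ∉ S → (v, x) ∉ N.arcs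

/-- `S` is a cherry of `N` on `X`. -/
def IsCherry (N : Net) (X S : Finset ℕ) : Prop :=
  2 ≤ S.card ∧ S ⊆ X ∧ ∃ v : ℕ, N.IsCherryVert X S v

/-- `S` is an isolated cherry of `N` on `X`. -/
def IsIsolatedCherry (N : Net) (X S : Finset ℕ) : Prop :=
  2 ≤ S.card ∧ S ⊆ X ∧
  ∃ v : ℕ, N.IsCherryVert X S v ∧ N.outdeg v = S.card ∧ N.indeg v = 1

/-- `(A : B : z)` is a cactus of `N` on `X` with split vertex `vH`, end vertex `h`,
and cycle interior vertices `P` (carrying the pendant leaves `A` in order) and `Q`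
(carrying the pendant leaves `B` in order). -/
def IsCactusData (N : Net) (X : Finset ℕ) (A B : List ℕ) (z vH h : ℕ)
    (P Q : List ℕ) : Prop :=
  A ≠ [] ∧ (A ++ B ++ [z]).Nodup ∧ (∀ x ∈ A ++ B ++ [z], x ∈ X) ∧
  P.length = A.length ∧ Q.length = B.length ∧
  List.Chain' N.ArcRel (vH :: (P ++ [h])) ∧
  List.Chain' N.ArcRel (vH :: (Q ++ [h])) ∧
  (vH :: h :: (P ++ Q)).Nodup ∧
  (∀ u ∈ vH :: h :: (P ++ Q), u ∈ N.verts) ∧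
  N.outdeg h = 1 ∧ (h, z) ∈ N.arcs ∧
  (∀ pr ∈ P.zip A, (pr.1, pr.2) ∈ N.arcs) ∧
  (∀ pr ∈ Q.zip B, (pr.1, pr.2) ∈ N.arcs) ∧
  (∀ u ∈ P ++ Q, N.indeg u = 1 ∧ N.outdeg u = 2)

/-- `(A : B : z)` is a cactus of `N` on `X` with split vertex `vH` and end vertex `h`. -/
def IsCactus (N : Net) (X : Finset ℕ) (A B : List ℕ) (z vH h : ℕ) : Prop :=
  ∃ P Q : List ℕ, N.IsCactusData X A B z vH h P Q

/-- The support of a cactus `(A : B : z)`. -/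
def cactusSupport (A B : List ℕ) (z : ℕ) : Finset ℕ := (A ++ B ++ [z]).toFinset

/-- The split vertex condition making a cactus isolated. -/
def IsIsolatedAt (N : Net) (vH : ℕ) : Prop := N.indeg vH = 1 ∧ N.outdeg vH = 2

/-- Renaming: `rn a b` maps `a` to `b` and fixes everything else. -/
def rn (a b u : ℕ) : ℕ := if u = a then b else u

/-- Cherry reduction `C_{z:S}`: remove all leaves in `S` except `z`,
together with their incident arcs. -/
def cherryRed (N : Net) (S : Finset ℕ) (z : ℕ) : Net :=
  { verts := N.verts \ S.erase z
    arcs := N.arcs.filter fun a => a.1 ∉ S.erase z ∧ a.2 ∉ S.erase z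
    root := N.root }

/-- Isolated cherry reduction `C̄_{z:S}` (for the cherry at `vS`): remove all leaves
in `S` together with their incident arcs and relabel `vS` as the leaf `z`. -/
def isoCherryRed (N : Net) (S : Finset ℕ) (z vS : ℕ) : Net :=
  { verts := (N.verts \ S).image (rn vS z)
    arcs := (N.arcs.filter fun a => a.1 ∉ S ∧ a.2 ∉ S).image
      fun a => (rn vS z a.1, rn vS z a.2)
    root := rn vS z N.root }

/-- Cactus reduction `H_{z:S}`: here `D = C_H - {v_H}`; remove the vertices in
`D ∪ (S - {z})` together with all arcs meeting them (this includes the two outgoing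
cycle arcs of `v_H`) and add the new arc `(v_H, z)`. -/
def cactusRed (N : Net) (D S : Finset ℕ) (z vH : ℕ) : Net :=
  { verts := N.verts \ (D ∪ S.erase z)
    arcs := insert (vH, z)
      (N.arcs.filter fun a => a.1 ∉ D ∪ S.erase z ∧ a.2 ∉ D ∪ S.erase z)
    root := N.root }

/-- Isolated cactus reduction `H̄_{z:S}`: here `D = C_H - {v_H}`; remove the vertices
in `D ∪ (S - {z})` together with all arcs meeting them (this includes the two outgoing
arcs of `v_H`) and replace `v_H` by `z`. -/
def isoCactusRed (N : Net) (D S : Finset ℕ) (z vH : ℕ) : Net :=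
  { verts := (N.verts \ (D ∪ S.erase z)).image (rn vH z)
    arcs := (N.arcs.filter fun a => a.1 ∉ D ∪ S.erase z ∧ a.2 ∉ D ∪ S.erase z).image
      fun a => (rn vH z a.1, rn vH z a.2)
    root := rn vH z N.root }

/-- The four kinds of reductions. -/
inductive RedKind : Type
  | cherry | isoCherry | cactus | isoCactus

/-- `M` is the result of applying the reduction `R_{z:S}` of kind `k` to `N`
(in particular the corresponding cherry/cactus structure is present in `N`). -/
def IsReductionOf (k : RedKind) (N : Net) (X S : Finset ℕ) (z : ℕ) (M : Net) : Prop :=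
  match k with
  | .cherry => z ∈ S ∧ N.IsCherry X S ∧ ¬ N.IsIsolatedCherry X S ∧ M = N.cherryRed S z
  | .isoCherry => z ∈ S ∧ 2 ≤ S.card ∧ S ⊆ X ∧
      ∃ vS : ℕ, N.IsCherryVert X S vS ∧ N.outdeg vS = S.card ∧ N.indeg vS = 1 ∧
        M = N.isoCherryRed S z vS
  | .cactus => ∃ A B : List ℕ, ∃ vH h : ℕ, ∃ P Q : List ℕ,
      N.IsCactusData X A B z vH h P Q ∧ S = cactusSupport A B z ∧
      ¬ N.IsIsolatedAt vH ∧ M = N.cactusRed (insert h (P ++ Q).toFinset) S z vH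
  | .isoCactus => ∃ A B : List ℕ, ∃ vH h : ℕ, ∃ P Q : List ℕ,
      N.IsCactusData X A B z vH h P Q ∧ S = cactusSupport A B z ∧
      N.IsIsolatedAt vH ∧ M = N.isoCactusRed (insert h (P ++ Q).toFinset) S z vH

/-- Cherry expansion `C⁻¹_{z:S}`: replace the leaf `z` by a new vertex `v` and add
new arcs `(v, s)` for all `s ∈ S` (recall `z ∈ S`). -/
def cherryExp (N : Net) (S : Finset ℕ) (z v : ℕ) : Net :=
  { verts := N.verts.image (rn z v) ∪ S
    arcs := (N.arcs.image fun a => (rn z v a.1, rn z v a.2)) ∪ S.image fun s => (v, s)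
    root := rn z v N.root }

end Net

set_option linter.unusedSectionVars false
namespace CactusAux

open List Relation

variable {r : ℕ → ℕ → Prop}

lemma transGen_of_chain' : ∀ {l : List ℕ} {x y : ℕ}, List.Chain' r (x :: l) → y ∈ l →
    Relation.TransGen r x y := by
  intro l
  induction l with
  | nil => intro x y _ hy; cases hy
  | cons a l ih =>
    intro x y hc hy
    rw [List.Chain', List.isChain_cons_cons] at hc
    rcases List.mem_cons.mp hy with rfl | hy
    · exact TransGen.single hc.1
    · exact TransGen.head hc.1 (ih hc.2 hy)

lemma nodup_of_chain' (hacyc : ∀ v : ℕ, ¬ Relation.TransGen r v v) :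
    ∀ {l : List ℕ}, List.Chain' r l → l.Nodup := by
  intro l
  induction l with
  | nil => intro _; exact List.nodup_nil
  | cons a l ih =>
    intro hc
    refine List.nodup_cons.mpr ⟨fun ha => ?_, ih hc.tail⟩
    exact hacyc a (transGen_of_chain' hc ha)

lemma reflTransGen_of_chain' {l : List ℕ} {x y : ℕ} (hc : List.Chain' r (x :: l))
    (hy : y ∈ x :: l) : Relation.ReflTransGen r x y := by
  rcases List.mem_cons.mp hy with rfl | hy
  · exact ReflTransGen.refl
  · exact (transGen_of_chain' hc hy).to_reflTransGen

lemma exists_path_of_reflTransGen {u v : ℕ} (h : Relation.ReflTransGen r u v) :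
    ∃ p : List ℕ, p ≠ [] ∧ List.Chain' r p ∧ p.head? = some u ∧ p.getLast? = some v := by
  obtain ⟨l, hl, hlast⟩ := List.exists_isChain_cons_of_relationReflTransGen h
  refine ⟨u :: l, List.cons_ne_nil _ _, hl, by simp, ?_⟩
  rw [List.getLast?_eq_getLast (List.cons_ne_nil _ _), hlast]


open scoped Classical

variable {N : Net} {X : Finset ℕ}

lemma mem_arcs_of_snd {p : ℕ × ℕ} {v : ℕ} (hp1 : p ∈ N.arcs) (hp2 : p.2 = v) :
    (p.1, v) ∈ N.arcs := by rw [← hp2]; simpa using hp1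

lemma mem_arcs_of_fst {p : ℕ × ℕ} {v : ℕ} (hp1 : p ∈ N.arcs) (hp2 : p.1 = v) :
    (v, p.2) ∈ N.arcs := by rw [← hp2]; simpa using hp1

lemma indeg_pos {a v : ℕ} (h : (a, v) ∈ N.arcs) : 1 ≤ N.indeg v :=
  Finset.card_pos.mpr ⟨(a, v), Finset.mem_filter.mpr ⟨h, rfl⟩⟩

lemma outdeg_pos {v b : ℕ} (h : (v, b) ∈ N.arcs) : 1 ≤ N.outdeg v :=
  Finset.card_pos.mpr ⟨(v, b), Finset.mem_filter.mpr ⟨h, rfl⟩⟩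

lemma indeg_unique {v a b : ℕ} (h1 : N.indeg v ≤ 1) (ha : (a, v) ∈ N.arcs)
    (hb : (b, v) ∈ N.arcs) : a = b := by
  have := Finset.card_le_one.mp h1 (a, v) (Finset.mem_filter.mpr ⟨ha, rfl⟩)
    (b, v) (Finset.mem_filter.mpr ⟨hb, rfl⟩)
  exact congrArg Prod.fst this

lemma outdeg_unique {v a b : ℕ} (h1 : N.outdeg v ≤ 1) (ha : (v, a) ∈ N.arcs)
    (hb : (v, b) ∈ N.arcs) : a = b := by
  have := Finset.card_le_one.mp h1 (v, a) (Finset.mem_filter.mpr ⟨ha, rfl⟩)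
    (v, b) (Finset.mem_filter.mpr ⟨hb, rfl⟩)
  exact congrArg Prod.snd this

lemma indeg_eq_one {v a : ℕ} (ha : (a, v) ∈ N.arcs) (hu : ∀ b, (b, v) ∈ N.arcs → b = a) :
    N.indeg v = 1 := by
  refine le_antisymm (Finset.card_le_one.mpr fun p hp q hq => ?_) (indeg_pos ha)
  obtain ⟨hp1, hp2⟩ := Finset.mem_filter.mp hp
  obtain ⟨hq1, hq2⟩ := Finset.mem_filter.mp hq
  have e1 : p = (a, v) := Prod.ext (hu p.1 (mem_arcs_of_snd hp1 hp2)) hp2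
  have e2 : q = (a, v) := Prod.ext (hu q.1 (mem_arcs_of_snd hq1 hq2)) hq2
  rw [e1, e2]

lemma outdeg_eq_one {v a : ℕ} (ha : (v, a) ∈ N.arcs) (hu : ∀ b, (v, b) ∈ N.arcs → b = a) :
    N.outdeg v = 1 := by
  refine le_antisymm (Finset.card_le_one.mpr fun p hp q hq => ?_) (outdeg_pos ha)
  obtain ⟨hp1, hp2⟩ := Finset.mem_filter.mp hp
  obtain ⟨hq1, hq2⟩ := Finset.mem_filter.mp hq
  have e1 : p = (v, a) := Prod.ext hp2 (hu p.2 (mem_arcs_of_fst hp1 hp2))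
  have e2 : q = (v, a) := Prod.ext hq2 (hu q.2 (mem_arcs_of_fst hq1 hq2))
  rw [e1, e2]

lemma outdeg_eq_two {u s x : ℕ} (hs : (u, s) ∈ N.arcs) (hx : (u, x) ∈ N.arcs) (hsx : s ≠ x)
    (hu : ∀ y, (u, y) ∈ N.arcs → y = s ∨ y = x) : N.outdeg u = 2 := by
  have : N.arcs.filter (fun a => a.1 = u) = {(u, s), (u, x)} := by
    ext p
    simp only [Finset.mem_filter, Finset.mem_insert, Finset.mem_singleton]
    constructor
    · rintro ⟨hp, rfl⟩
      rcases hu p.2 (by rwa [Prod.mk.eta]) with h | h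
      · left; rw [← h]
      · right; rw [← h]
    · rintro (rfl | rfl) <;> simp [hs, hx]
  rw [Net.outdeg, this]
  rw [Finset.card_insert_of_notMem (by simp [hsx]), Finset.card_singleton]

lemma two_in_arcs {v : ℕ} (h2 : 2 ≤ N.indeg v) :
    ∃ a b : ℕ, a ≠ b ∧ (a, v) ∈ N.arcs ∧ (b, v) ∈ N.arcs := by
  obtain ⟨p, hp, q, hq, hpq⟩ := Finset.one_lt_card.mp h2
  obtain ⟨hp1, hp2⟩ := Finset.mem_filter.mp hp
  obtain ⟨hq1, hq2⟩ := Finset.mem_filter.mp hq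
  exact ⟨p.1, q.1, fun h => hpq (Prod.ext h (hp2.trans hq2.symm)),
    mem_arcs_of_snd hp1 hp2, mem_arcs_of_snd hq1 hq2⟩

section Phylo
variable (hphy : N.IsPhyloNet X)
include hphy

lemma acyc : ∀ v : ℕ, ¬ Relation.TransGen N.ArcRel v v := hphy.2.1

lemma arc_mem_left {a b : ℕ} (h : (a, b) ∈ N.arcs) : a ∈ N.verts := (hphy.1 _ h).1
lemma arc_mem_right {a b : ℕ} (h : (a, b) ∈ N.arcs) : b ∈ N.verts := (hphy.1 _ h).2

lemma transGen_of_reach_ne {u v : ℕ} (h : N.Reach u v) (hne : u ≠ v) :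
    Relation.TransGen N.ArcRel u v := by
  rcases (Relation.reflTransGen_iff_eq_or_transGen.mp h) with h | h
  · exact absurd h.symm hne
  · exact h

lemma reach_asym {u v : ℕ} (h1 : N.Reach u v) (h2 : N.Reach v u) : u = v := by
  by_contra hne
  exact acyc hphy u (Relation.TransGen.trans_left (transGen_of_reach_ne hphy h1 hne) h2)

lemma root_reach : ∀ v ∈ N.verts, N.Reach N.root v := by
  have key : ∀ n, ∀ v ∈ N.verts, (N.verts.filter fun u => N.Reach u v).card ≤ n →
      N.Reach N.root v := by
    intro n
    induction n with
    | zero =>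
      intro v hv hc
      exact absurd (Nat.le_zero.mp hc)
        (Finset.card_ne_zero_of_mem (Finset.mem_filter.mpr ⟨hv, ReflTransGen.refl⟩))
    | succ n ih =>
      intro v hv hc
      by_cases hr : v = N.root
      · exact hr ▸ ReflTransGen.refl
      · have hind : N.indeg v ≠ 0 := fun h0 => hr (hphy.2.2.2.2.1 v hv h0)
        obtain ⟨p, hp⟩ := Finset.card_pos.mp (Nat.pos_of_ne_zero hind)
        obtain ⟨hp1, hp2⟩ := Finset.mem_filter.mp hp
        have ha : (p.1, v) ∈ N.arcs := mem_arcs_of_snd hp1 hp2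
        have hav : p.1 ∈ N.verts := arc_mem_left hphy ha
        have hsub : (N.verts.filter fun u => N.Reach u p.1) ⊆
            (N.verts.filter fun u => N.Reach u v) := by
          intro u hu
          obtain ⟨hu1, hu2⟩ := Finset.mem_filter.mp hu
          exact Finset.mem_filter.mpr ⟨hu1, hu2.tail ha⟩
        have hvn : v ∉ (N.verts.filter fun u => N.Reach u p.1) := by
          intro hvm
          exact acyc hphy v (Relation.TransGen.trans_right ((Finset.mem_filter.mp hvm).2)
            (TransGen.single ha))
        have hlt : (N.verts.filter fun u => N.Reach u p.1).card ≤ n := by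
          have := Finset.card_lt_card (Finset.ssubset_iff_of_subset hsub |>.mpr
            ⟨v, Finset.mem_filter.mpr ⟨hv, ReflTransGen.refl⟩, hvn⟩)
          omega
        exact (ih p.1 hav hlt).tail ha
  intro v hv
  exact key _ v hv le_rfl

end Phylo
/-- Two internally disjoint directed paths from `vH` to `h`, with interior vertex
lists `P` and `Q`. -/
def TP (N : Net) (vH h : ℕ) (P Q : List ℕ) : Prop :=
  List.Chain' N.ArcRel (vH :: P ++ [h]) ∧
  List.Chain' N.ArcRel (vH :: Q ++ [h]) ∧
  (vH :: h :: (P ++ Q)).Nodup ∧ (P ≠ [] ∨ Q ≠ [])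

/-- The vertex set of the cycle determined by a `TP`. -/
def cyc (vH h : ℕ) (P Q : List ℕ) : Finset ℕ := (vH :: h :: (P ++ Q)).toFinset

lemma mem_cyc {vH h x : ℕ} {P Q : List ℕ} :
    x ∈ cyc vH h P Q ↔ x ∈ vH :: h :: (P ++ Q) := List.mem_toFinset

lemma tp_swap {vH h : ℕ} {P Q : List ℕ} (htp : TP N vH h P Q) : TP N vH h Q P := by
  obtain ⟨h1, h2, hnd, hne⟩ := htp
  refine ⟨h2, h1, ?_, hne.symm⟩
  exact (((List.perm_append_comm (l₁ := P) (l₂ := Q)).cons h).cons vH).nodup hnd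

lemma isCycle_of_list {L : List ℕ} (h3 : 3 ≤ L.length) (hnd : L.Nodup)
    (hch : List.Chain' N.Adj L) (hne : L ≠ [])
    (hwrap : N.Adj (L.getLast hne) (L.head hne)) :
    N.IsCycle L.toFinset := by
  refine ⟨L.length, h3, fun i => L.get i, List.nodup_iff_injective_get.mp hnd, ?_, ?_⟩
  · ext a
    simp only [Finset.mem_image, Finset.mem_univ, true_and, List.mem_toFinset]
    constructor
    · rintro ⟨i, rfl⟩; exact List.get_mem L i
    · intro ha; obtain ⟨i, hi⟩ := List.mem_iff_get.mp ha; exact ⟨i, hi⟩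
  · intro i
    by_cases hlt : i.val + 1 < L.length
    · have hmod : (i.val + 1) % L.length = i.val + 1 := Nat.mod_eq_of_lt hlt
      have heq : (⟨(i.val + 1) % L.length, Nat.mod_lt _ (by omega)⟩ : Fin L.length)
          = ⟨i.val + 1, hlt⟩ := Fin.ext hmod
      rw [heq]
      exact List.isChain_iff_getElem.mp hch i.val (by omega)
    · have hi : i.val + 1 = L.length := by omega
      have hmod : (i.val + 1) % L.length = 0 := by rw [hi]; exact Nat.mod_self _
      have heq : (⟨(i.val + 1) % L.length, Nat.mod_lt _ (by omega)⟩ : Fin L.length)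
          = ⟨0, by omega⟩ := Fin.ext hmod
      rw [heq]
      have hlast : L.get i = L.getLast hne := by
        rw [List.getLast_eq_getElem, List.get_eq_getElem]
        congr 1
        omega
      have hhead : L.get ⟨0, by omega⟩ = L.head hne := by
        rw [← List.get_mk_zero (by omega)]
      have := hwrap
      rw [← hlast, ← hhead] at this
      exact this

lemma chain_mem_verts (hphy : N.IsPhyloNet X) {l : List ℕ} (hc : List.Chain' N.ArcRel l)
    (hl : 2 ≤ l.length) : ∀ x ∈ l, x ∈ N.verts := by
  intro x hx
  obtain ⟨⟨k, hk⟩, rfl⟩ := List.mem_iff_get.mp hx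
  by_cases hlt : k + 1 < l.length
  · exact arc_mem_left hphy (List.isChain_iff_getElem.mp hc k (by omega))
  · have hk1 : 1 ≤ k := by omega
    have := List.isChain_iff_getElem.mp hc (k - 1) (by omega)
    simp only [show k - 1 + 1 = k by omega] at this
    exact arc_mem_right hphy this

lemma tp_isCycle {vH h : ℕ} {P Q : List ℕ} (htp : TP N vH h P Q) :
    N.IsCycle (cyc vH h P Q) := by
  obtain ⟨h1, h2, hnd, hne⟩ := htp
  have hadj1 : List.Chain' N.Adj (vH :: P ++ [h]) := h1.imp (fun a b hab => Or.inl hab)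
  have hrev : List.Chain' N.Adj (h :: (Q.reverse ++ [vH])) := by
    have : List.Chain' (flip N.Adj) (vH :: Q ++ [h]) :=
      h2.imp (fun a b hab => (Or.inr hab : N.Adj _ _))
    have := List.isChain_reverse.mpr this
    simpa [flip, List.Chain'] using this
  set L := vH :: (P ++ h :: Q.reverse) with hL
  have hML : (vH :: P ++ [h]) ++ (Q.reverse ++ [vH]) = L ++ [vH] := by
    simp [hL]
  have hchM : List.Chain' N.Adj (L ++ [vH]) := by
    rw [← hML]
    refine List.IsChain.append hadj1 ((List.isChain_cons.mp hrev).2) ?_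
    intro x hx y hy
    have hx' : x = h := by
      have : (vH :: P ++ [h]).getLast? = some h := by
        rw [show vH :: P ++ [h] = (vH :: P) ++ [h] by simp, List.getLast?_concat]
      rw [this] at hx; exact (Option.some_inj.mp hx).symm
    subst hx'
    exact (List.isChain_cons.mp hrev).1 y hy
  have hLne : L ≠ [] := by simp [hL]
  have hperm : L ~ vH :: h :: (P ++ Q) := by
    refine List.Perm.cons vH ?_
    calc P ++ h :: Q.reverse ~ h :: (P ++ Q.reverse) := List.perm_middle
      _ ~ h :: (P ++ Q) := List.Perm.cons h (List.Perm.append_left P (List.reverse_perm Q))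
  have hndL : L.Nodup := hperm.symm.nodup hnd
  have hfin : L.toFinset = cyc vH h P Q := by
    ext a; simp only [List.mem_toFinset, cyc, hperm.mem_iff]
  have h3 : 3 ≤ L.length := by
    have : P.length + Q.length ≥ 1 := by
      rcases hne with hne | hne
      · have := List.length_pos_iff.mpr hne; omega
      · have := List.length_pos_iff.mpr hne; omega
    simp [hL]; omega
  have hwrap : N.Adj (L.getLast hLne) (L.head hLne) := by
    have hjun := (List.isChain_append.mp hchM).2.2
    have h1' := hjun (L.getLast hLne) (by simp [List.getLast?_eq_getLast hLne]) vH (by simp)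
    have hh : L.head hLne = vH := by simp [hL]
    rw [hh]; exact h1'
  rw [← hfin]
  exact isCycle_of_list h3 hndL ((hchM).prefix (List.prefix_append _ _)) hLne hwrap

lemma getLast?_of_suffix {l₁ l₂ : List ℕ} (h : l₁ <:+ l₂) (hne : l₁ ≠ []) :
    l₁.getLast? = l₂.getLast? := by
  obtain ⟨t, rfl⟩ := h
  rw [List.getLast?_append_of_ne_nil _ hne]

lemma extract (hphy : N.IsPhyloNet X) {h : ℕ} {p₀ q₀ : List ℕ}
    (hp : List.Chain' N.ArcRel (p₀ ++ [h])) (hq : List.Chain' N.ArcRel (q₀ ++ [h]))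
    (hp0 : p₀ ≠ []) (hq0 : q₀ ≠ [])
    (hhead : p₀.head? = q₀.head?)
    (hlast : p₀.getLast? ≠ q₀.getLast?) :
    ∃ vH P Q, TP N vH h P Q ∧ (vH :: P).getLast? = p₀.getLast? ∧
      (vH :: Q).getLast? = q₀.getLast? := by
  have hnp := nodup_of_chain' (acyc hphy) hp
  have hnq := nodup_of_chain' (acyc hphy) hq
  rw [List.nodup_append'] at hnp hnq
  obtain ⟨hnodp, -, hdisp⟩ := hnp
  obtain ⟨hnodq, -, hdisq⟩ := hnq
  have hhp : h ∉ p₀ := fun hh => hdisp hh (by simp)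
  have hhq : h ∉ q₀ := fun hh => hdisq hh (by simp)
  set S := (Finset.range p₀.length).filter
    (fun i => ∃ hi : i < p₀.length, p₀[i] ∈ q₀) with hS
  have h0S : 0 ∈ S := by
    have h0 : 0 < p₀.length := List.length_pos_iff.mpr hp0
    refine Finset.mem_filter.mpr ⟨Finset.mem_range.mpr h0, h0, ?_⟩
    cases p₀ with
    | nil => exact absurd rfl hp0
    | cons a l =>
      cases q₀ with
      | nil => exact absurd rfl hq0
      | cons b m =>
        simp only [List.head?] at hhead
        have hab : a = b := by injection hhead
        simp [hab]
  have hSne : S.Nonempty := ⟨0, h0S⟩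
  set i₀ := S.max' hSne with hi₀def
  have hi₀S : i₀ ∈ S := S.max'_mem hSne
  obtain ⟨-, hi₀, hwq⟩ := Finset.mem_filter.mp hi₀S
  set w := p₀[i₀] with hwdef
  have hmax : ∀ j (hj : j < p₀.length), p₀[j] ∈ q₀ → j ≤ i₀ := by
    intro j hj hjq
    exact S.le_max' j (Finset.mem_filter.mpr ⟨Finset.mem_range.mpr hj, hj, hjq⟩)
  obtain ⟨q₁, q₂, hq₀⟩ := List.append_of_mem hwq
  set P := p₀.drop (i₀ + 1) with hPdef
  have hkey : p₀.drop i₀ = w :: P := List.drop_eq_getElem_cons hi₀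
  -- chains
  have hchain1 : List.Chain' N.ArcRel (w :: P ++ [h]) := by
    have hsuf : (p₀.drop i₀) ++ [h] <:+ p₀ ++ [h] := by
      obtain ⟨t, ht⟩ := List.drop_suffix i₀ p₀
      exact ⟨t, by rw [← List.append_assoc, ht]⟩
    have := hp.suffix hsuf
    rwa [hkey] at this
  have hchain2 : List.Chain' N.ArcRel (w :: q₂ ++ [h]) := by
    have hsuf : (w :: q₂) ++ [h] <:+ q₀ ++ [h] := by
      refine ⟨q₁, ?_⟩
      rw [← List.append_assoc, ← hq₀]
    exact hq.suffix (by simpa using hsuf)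
  -- getLast? facts
  have hlast1 : (w :: P).getLast? = p₀.getLast? :=
    getLast?_of_suffix (hkey ▸ List.drop_suffix i₀ p₀) (by simp)
  have hlast2 : (w :: q₂).getLast? = q₀.getLast? :=
    getLast?_of_suffix ⟨q₁, hq₀.symm⟩ (by simp)
  have hsufX : True := trivial
  -- nodup components
  have hsuf1 : w :: P <:+ p₀ := hkey ▸ List.drop_suffix i₀ p₀
  have hsuf2 : w :: q₂ <:+ q₀ := ⟨q₁, hq₀.symm⟩
  have hnwP : (w :: P).Nodup := hnodp.sublist hsuf1.sublist
  have hnq2 : (w :: q₂).Nodup := hnodq.sublist hsuf2.sublist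
  have hPp : ∀ x ∈ P, x ∈ p₀ := fun x hx => List.mem_of_mem_drop hx
  have hQq : ∀ x ∈ q₂, x ∈ q₀ := fun x hx => by rw [hq₀]; simp [hx]
  have hwp : w ∈ p₀ := List.getElem_mem hi₀
  have hdisjPQ : ∀ x ∈ P, x ∉ q₂ := by
    intro x hxP hxQ
    obtain ⟨k, hk, hxk⟩ := List.mem_iff_getElem.mp hxP
    have hk' : i₀ + 1 + k < p₀.length := by
      have hlen : P.length = p₀.length - (i₀ + 1) := by rw [hPdef, List.length_drop]
      omega
    have hxp : p₀[i₀ + 1 + k] = x := by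
      rw [← hxk, List.getElem_drop]
    have := hmax (i₀ + 1 + k) hk' (by rw [hxp]; exact hQq x hxQ)
    omega
  have hnodup : (w :: h :: (P ++ q₂)).Nodup := by
    refine List.nodup_cons.mpr ⟨?_, List.nodup_cons.mpr ⟨?_, ?_⟩⟩
    · intro hmem
      rcases List.mem_cons.mp hmem with hwh | hmem
      · exact hhp (hwh ▸ hwp)
      · rcases List.mem_append.mp hmem with hx | hx
        · exact (List.nodup_cons.mp hnwP).1 hx
        · exact (List.nodup_cons.mp hnq2).1 hx
    · intro hmem
      rcases List.mem_append.mp hmem with hx | hx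
      · exact hhp (hPp _ hx)
      · exact hhq (hQq _ hx)
    · exact List.nodup_append'.mpr ⟨(List.nodup_cons.mp hnwP).2, (List.nodup_cons.mp hnq2).2,
        fun x hx hx' => hdisjPQ x hx hx'⟩
  have hor : P ≠ [] ∨ q₂ ≠ [] := by
    by_contra hcon
    push_neg at hcon
    obtain ⟨hP, hQ⟩ := hcon
    apply hlast
    rw [← hlast1, ← hlast2, hP, hQ]
  exact ⟨w, P, q₂, ⟨hchain1, hchain2, hnodup, hor⟩, hlast1, hlast2⟩

lemma succ_unique {l : List ℕ} (hl : l.Nodup) {l₁ l₂ m₁ m₂ : List ℕ} {u s r : ℕ}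
    (h1 : l = l₁ ++ u :: s :: l₂) (h2 : l = m₁ ++ u :: r :: m₂) : s = r := by
  have e1 : l[l₁.length]? = some u := by
    rw [h1, List.getElem?_append_right le_rfl]
    simp
  have e2 : l[m₁.length]? = some u := by
    rw [h2, List.getElem?_append_right le_rfl]
    simp
  have hlen : l₁.length = m₁.length := by
    refine (List.getElem?_inj ?_ hl).mp (e1.trans e2.symm)
    rw [h1]; simp
  have e3 : l[l₁.length + 1]? = some s := by
    rw [h1, List.getElem?_append_right (by omega)]
    simp
  have e4 : l[m₁.length + 1]? = some r := by
    rw [h2, List.getElem?_append_right (by omega)]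
    simp
  rw [hlen] at e3
  rw [e4] at e3
  exact (Option.some_inj.mp e3).symm

lemma side_split {vH h : ℕ} {P Q : List ℕ} (htp : TP N vH h P Q) {u : ℕ} (hu : u ∈ P) :
    ∃ d s l₁ l₂, vH :: P ++ [h] = l₁ ++ d :: u :: s :: l₂ ∧
      (d, u) ∈ N.arcs ∧ (u, s) ∈ N.arcs ∧ d ∈ vH :: P ∧ (s ∈ P ∨ s = h) := by
  obtain ⟨a, b, rfl⟩ := List.append_of_mem hu
  have hva : (vH :: a) ≠ [] := List.cons_ne_nil _ _
  obtain ⟨l₁, d, hsplit1, hdmem⟩ : ∃ l₁ d, l₁ ++ [d] = vH :: a ∧ d ∈ vH :: a :=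
    ⟨(vH :: a).dropLast, (vH :: a).getLast hva, List.dropLast_append_getLast hva,
      List.getLast_mem hva⟩
  obtain ⟨s, l₂, hbs⟩ : ∃ s l₂, b ++ [h] = s :: l₂ := by
    cases b with
    | nil => exact ⟨h, [], rfl⟩
    | cons x xs => exact ⟨x, xs ++ [h], rfl⟩
  have hshape : vH :: (a ++ u :: b) ++ [h] = l₁ ++ d :: u :: s :: l₂ := by
    have : vH :: (a ++ u :: b) ++ [h] = (vH :: a) ++ u :: (b ++ [h]) := by simp
    rw [this, ← hsplit1, hbs]
    simp
  have hchain := htp.1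
  rw [hshape] at hchain
  have harc1 : N.ArcRel d u := (List.isChain_append_cons_cons.mp hchain).2.1
  have hchain2 : List.Chain' N.ArcRel (u :: s :: l₂) :=
    (List.isChain_append_cons_cons.mp hchain).2.2
  have harc2 : N.ArcRel u s := (List.isChain_cons_cons.mp hchain2).1
  refine ⟨d, s, l₁, l₂, hshape, harc1, harc2, ?_, ?_⟩
  · rcases List.mem_cons.mp hdmem with rfl | hda
    · exact List.mem_cons_self
    · exact List.mem_cons_of_mem _ (by simp [hda])
  · have : s ∈ b ++ [h] := by rw [hbs]; exact List.mem_cons_self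
    rcases List.mem_append.mp this with hsb | hsh
    · exact Or.inl (by simp [hsb])
    · exact Or.inr (by simpa using hsh)

lemma tp_pred_succ {vH h : ℕ} {P Q : List ℕ} (htp : TP N vH h P Q) {u : ℕ}
    (hu : u ∈ P ++ Q) :
    ∃ d s, (d, u) ∈ N.arcs ∧ (u, s) ∈ N.arcs ∧ d ∈ vH :: (P ++ Q) ∧
      (s ∈ P ++ Q ∨ s = h) := by
  rcases List.mem_append.mp hu with hup | huq
  · obtain ⟨d, s, l₁, l₂, -, h1, h2, h3, h4⟩ := side_split htp hup
    refine ⟨d, s, h1, h2, ?_, ?_⟩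
    · rcases List.mem_cons.mp h3 with rfl | hd
      · exact List.mem_cons_self
      · exact List.mem_cons_of_mem _ (by simp [hd])
    · rcases h4 with hs | hs
      · exact Or.inl (by simp [hs])
      · exact Or.inr hs
  · obtain ⟨d, s, l₁, l₂, -, h1, h2, h3, h4⟩ := side_split (tp_swap htp) huq
    refine ⟨d, s, h1, h2, ?_, ?_⟩
    · rcases List.mem_cons.mp h3 with rfl | hd
      · exact List.mem_cons_self
      · exact List.mem_cons_of_mem _ (by simp [hd])
    · rcases h4 with hs | hs
      · exact Or.inl (by simp [hs])
      · exact Or.inr hs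

lemma tp_first_arc {vH h : ℕ} {P Q : List ℕ} (htp : TP N vH h P Q) :
    ∃ c, (vH, c) ∈ N.arcs ∧ (c ∈ P ++ Q ∨ c = h) := by
  have hchain := htp.1
  cases P with
  | nil =>
    have harc : N.ArcRel vH h := by
      have := (List.isChain_cons_cons (l := [])).mp (show List.IsChain N.ArcRel [vH, h] by simpa [List.Chain'] using hchain)
      exact this.1
    exact ⟨h, harc, Or.inr rfl⟩
  | cons x xs =>
    have harc : N.ArcRel vH x := by
      have hc : List.Chain' N.ArcRel (vH :: x :: (xs ++ [h])) := by simpa using hchain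
      exact (List.isChain_cons_cons.mp hc).1
    exact ⟨x, harc, Or.inl (by simp)⟩

lemma tp_succ_exists {vH h : ℕ} {P Q : List ℕ} (htp : TP N vH h P Q) {x : ℕ}
    (hx : x ∈ vH :: (P ++ Q)) : ∃ c, (x, c) ∈ N.arcs ∧ (c ∈ P ++ Q ∨ c = h) := by
  rcases List.mem_cons.mp hx with rfl | hx
  · exact tp_first_arc htp
  · obtain ⟨d, s, -, hs, -, hm⟩ := tp_pred_succ htp hx
    exact ⟨s, hs, hm⟩

lemma tp_reach {vH h : ℕ} {P Q : List ℕ} (htp : TP N vH h P Q) {x : ℕ}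
    (hx : x ∈ vH :: (P ++ Q)) : N.Reach vH x := by
  rcases List.mem_cons.mp hx with rfl | hx
  · exact Relation.ReflTransGen.refl
  · rcases List.mem_append.mp hx with hxp | hxq
    · exact reflTransGen_of_chain' htp.1 (by simp [hxp])
    · exact reflTransGen_of_chain' htp.2.1 (by simp [hxq])

lemma exists_tp_lasts (hphy : N.IsPhyloNet X) {u a b : ℕ} (hab : a ≠ b)
    (ha : (a, u) ∈ N.arcs) (hb : (b, u) ∈ N.arcs) :
    ∃ vH P Q, TP N vH u P Q ∧ (vH :: P).getLast? = some a ∧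
      (vH :: Q).getLast? = some b := by
  obtain ⟨p, hpne, hpc, hph, hpl⟩ :=
    exists_path_of_reflTransGen (root_reach hphy a (arc_mem_left hphy ha))
  obtain ⟨q, hqne, hqc, hqh, hql⟩ :=
    exists_path_of_reflTransGen (root_reach hphy b (arc_mem_left hphy hb))
  have hpc' : List.Chain' N.ArcRel (p ++ [u]) := by
    refine List.IsChain.append hpc (List.isChain_singleton u) ?_
    intro x hx y hy
    simp only [List.head?_cons, Option.mem_def, Option.some_inj] at hy
    rw [hpl] at hx
    simp only [Option.mem_def, Option.some_inj] at hx
    rw [← hx, ← hy]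
    exact ha
  have hqc' : List.Chain' N.ArcRel (q ++ [u]) := by
    refine List.IsChain.append hqc (List.isChain_singleton u) ?_
    intro x hx y hy
    simp only [List.head?_cons, Option.mem_def, Option.some_inj] at hy
    rw [hql] at hx
    simp only [Option.mem_def, Option.some_inj] at hx
    rw [← hx, ← hy]
    exact hb
  obtain ⟨vH, P, Q, htp, hl1, hl2⟩ := extract hphy hpc' hqc' hpne hqne
    (hph.trans hqh.symm) (by rw [hpl, hql]; simp [hab])
  exact ⟨vH, P, Q, htp, by rw [hl1, hpl], by rw [hl2, hql]⟩

lemma mem_of_getLast?' {l : List ℕ} {a : ℕ} (h : l.getLast? = some a) : a ∈ l :=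
  List.mem_of_mem_getLast? (by rw [Option.mem_def, h])

lemma arc_of_chain_concat {l : List ℕ} {h x : ℕ}
    (hc : List.Chain' N.ArcRel (l ++ [h])) (hx : l.getLast? = some x) : (x, h) ∈ N.arcs :=
  (List.isChain_append.mp hc).2.2 x (by rw [Option.mem_def, hx]) h (by simp)

lemma two_le_inter {C₁ C₂ : Finset ℕ} {x y : ℕ} (hx1 : x ∈ C₁) (hx2 : x ∈ C₂)
    (hy1 : y ∈ C₁) (hy2 : y ∈ C₂) (hxy : x ≠ y) : 2 ≤ (C₁ ∩ C₂).card :=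
  Finset.one_lt_card.mpr ⟨x, Finset.mem_inter.mpr ⟨hx1, hx2⟩, y,
    Finset.mem_inter.mpr ⟨hy1, hy2⟩, hxy⟩

lemma m1 (hphy : N.IsPhyloNet X) (hnest : N.OneNested) {vH h : ℕ} {P Q : List ℕ}
    (htp : TP N vH h P Q) (hsink : ∀ y, (h, y) ∈ N.arcs → N.outdeg y = 0)
    {u d t : ℕ} (hu : u ∈ P ++ Q) (hd : (d, u) ∈ N.arcs)
    (hdC : d ∈ vH :: h :: (P ++ Q)) (ht : (t, u) ∈ N.arcs) : t = d := by
  by_contra hne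
  obtain ⟨vH₂, P₂, Q₂, htp₂, hl1, hl2⟩ := exists_tp_lasts hphy (fun e => hne e.symm) hd ht
  have hC2 := tp_isCycle htp₂ (N := N)
  have hC := tp_isCycle htp (N := N)
  have hdu : d ≠ u := fun e => acyc hphy u (TransGen.single (e ▸ hd))
  have huC : u ∈ cyc vH h P Q := mem_cyc.mpr (by simp [hu])
  have hdCm : d ∈ cyc vH h P Q := mem_cyc.mpr hdC
  have huC2 : u ∈ cyc vH₂ u P₂ Q₂ := mem_cyc.mpr (by simp)
  have hdC2 : d ∈ cyc vH₂ u P₂ Q₂ := by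
    have hm := mem_of_getLast?' hl1
    rcases List.mem_cons.mp hm with rfl | hm
    · exact mem_cyc.mpr (by simp)
    · exact mem_cyc.mpr (by simp [hm])
  have hCC : cyc vH h P Q = cyc vH₂ u P₂ Q₂ := by
    by_contra hCC
    have hle := hnest _ _ hC hC2 hCC
    have := two_le_inter huC huC2 hdCm hdC2 (fun e => hdu e.symm)
    omega
  have hnd := htp.2.2.1
  have hhne_u : h ≠ u := by
    intro e
    have : h ∉ P ++ Q := by
      have := List.nodup_cons.mp ((List.nodup_cons.mp hnd).2)
      exact this.1
    exact this (e ▸ hu)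
  have hh2 : h ∈ vH₂ :: u :: (P₂ ++ Q₂) := mem_cyc.mp (hCC ▸ mem_cyc.mpr (by simp))
  have hh2' : h ∈ vH₂ :: (P₂ ++ Q₂) := by
    rcases List.mem_cons.mp hh2 with rfl | hh2
    · exact List.mem_cons_self
    · rcases List.mem_cons.mp hh2 with he | hh2
      · exact absurd he hhne_u
      · exact List.mem_cons_of_mem _ hh2
  obtain ⟨c, hc, hcm⟩ := tp_succ_exists htp₂ hh2'
  have hcC : c ∈ vH :: h :: (P ++ Q) := by
    refine mem_cyc.mp (hCC ▸ (mem_cyc.mpr ?_) : _)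
    rcases hcm with hcm | rfl
    · simp [hcm]
    · simp
  have hout : N.outdeg c = 0 := hsink c hc
  rcases List.mem_cons.mp hcC with rfl | hcC
  · obtain ⟨e, he, -⟩ := tp_first_arc htp
    have := outdeg_pos he
    omega
  rcases List.mem_cons.mp hcC with rfl | hcC
  · exact acyc hphy c (TransGen.single hc)
  · obtain ⟨d', s', -, hs', -, -⟩ := tp_pred_succ htp hcC
    have := outdeg_pos hs'
    omega

lemma m2_chord (hphy : N.IsPhyloNet X) (hnest : N.OneNested) {vH h : ℕ} {P Q : List ℕ}
    (htp : TP N vH h P Q) {t : ℕ} (ht : (t, h) ∈ N.arcs) (htP : t ∈ P)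
    (hlast_ne : (vH :: P).getLast? ≠ some t) : False := by
  obtain ⟨P₁, P₂, rfl⟩ := List.append_of_mem htP
  cases P₂ with
  | nil =>
    apply hlast_ne
    rw [show vH :: (P₁ ++ [t]) = (vH :: P₁) ++ [t] by simp, List.getLast?_concat]
  | cons y P₂' =>
    have hnd := htp.2.2.1
    -- TP for the chord cycle
    have hchain1 : List.Chain' N.ArcRel (vH :: (P₁ ++ [t]) ++ [h]) := by
      have hpre : vH :: (P₁ ++ [t]) <+: vH :: (P₁ ++ t :: y :: P₂') ++ [h] := by
        refine ⟨y :: P₂' ++ [h], by simp⟩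
      refine List.IsChain.append (htp.1.prefix hpre) (List.isChain_singleton h) ?_
      intro a ha b hb
      simp only [List.head?_cons, Option.mem_def, Option.some_inj] at hb
      have : (vH :: (P₁ ++ [t])).getLast? = some t := by
        rw [show vH :: (P₁ ++ [t]) = (vH :: P₁) ++ [t] by simp, List.getLast?_concat]
      rw [this, Option.mem_def, Option.some_inj] at ha
      rw [← ha, ← hb]
      exact ht
    have hsub : vH :: h :: ((P₁ ++ [t]) ++ Q) <+ vH :: h :: ((P₁ ++ t :: y :: P₂') ++ Q) := by
      refine List.Sublist.cons₂ _ (List.Sublist.cons₂ _ (List.Sublist.append ?_ (List.Sublist.refl Q)))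
      have : P₁ ++ [t] <+: P₁ ++ t :: y :: P₂' := ⟨y :: P₂', by simp⟩
      exact this.sublist
    have htp₆ : TP N vH h (P₁ ++ [t]) Q :=
      ⟨hchain1, htp.2.1, hnd.sublist hsub, Or.inl (by simp)⟩
    have hC := tp_isCycle htp (N := N)
    have hC₆ := tp_isCycle htp₆ (N := N)
    have hne : cyc vH h (P₁ ++ [t]) Q ≠ cyc vH h (P₁ ++ t :: y :: P₂') Q := by
      intro he
      have hy : y ∈ cyc vH h (P₁ ++ t :: y :: P₂') Q := mem_cyc.mpr (by simp)
      rw [← he] at hy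
      have hy' := mem_cyc.mp hy
      -- y distinct from everything in the smaller cycle, via nodup of the big list
      have hndP : (P₁ ++ t :: y :: P₂').Nodup :=
        ((List.nodup_cons.mp ((List.nodup_cons.mp hnd).2)).2).of_append_left
      have hyt : y ∉ P₁ ++ [t] := by
        intro hyin
        rcases List.mem_append.mp hyin with hy1 | hy1
        · have := (List.nodup_append'.mp hndP).2.2
          exact this hy1 (by simp)
        · simp only [List.mem_singleton] at hy1
          have := (List.nodup_append'.mp hndP).2.1
          rw [hy1] at this
          exact (List.nodup_cons.mp this).1 (by simp)
      have hyvh : y ≠ vH := by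
        intro e
        have := (List.nodup_cons.mp hnd).1
        exact this (by simp [← e])
      have hyh : y ≠ h := by
        intro e
        have := (List.nodup_cons.mp ((List.nodup_cons.mp hnd).2)).1
        exact this (by simp [← e])
      have hyQ : y ∉ Q := by
        intro hyq
        have h2 := (List.nodup_cons.mp ((List.nodup_cons.mp hnd).2)).2
        have := (List.nodup_append'.mp h2).2.2
        exact this (by simp) hyq
      rcases List.mem_cons.mp hy' with e | hy'
      · exact hyvh e
      rcases List.mem_cons.mp hy' with e | hy'
      · exact hyh e
      rcases List.mem_append.mp hy' with e | e
      · exact hyt e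
      · exact hyQ e
    have hvh : vH ∈ cyc vH h (P₁ ++ [t]) Q ∩ cyc vH h (P₁ ++ t :: y :: P₂') Q := by
      exact Finset.mem_inter.mpr ⟨mem_cyc.mpr (by simp), mem_cyc.mpr (by simp)⟩
    have hh : h ∈ cyc vH h (P₁ ++ [t]) Q ∩ cyc vH h (P₁ ++ t :: y :: P₂') Q :=
      Finset.mem_inter.mpr ⟨mem_cyc.mpr (by simp), mem_cyc.mpr (by simp)⟩
    have hvhh : vH ≠ h := by
      intro e
      exact (List.nodup_cons.mp hnd).1 (by simp [e])
    have hle := hnest _ _ hC₆ hC hne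
    have := two_le_inter (Finset.mem_inter.mp hvh).1 (Finset.mem_inter.mp hvh).2
      (Finset.mem_inter.mp hh).1 (Finset.mem_inter.mp hh).2 hvhh
    omega

lemma m2 (hphy : N.IsPhyloNet X) (hnest : N.OneNested) {vH h : ℕ} {P Q : List ℕ}
    (htp : TP N vH h P Q) {t : ℕ} (ht : (t, h) ∈ N.arcs) :
    (vH :: P).getLast? = some t ∨ (vH :: Q).getLast? = some t := by
  by_contra hcon
  push_neg at hcon
  obtain ⟨hcon1, hcon2⟩ := hcon
  have hnd := htp.2.2.1
  have hvhh : vH ≠ h := fun e => (List.nodup_cons.mp hnd).1 (by simp [e])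
  -- the in-arc from the end of P
  obtain ⟨lp, hlp⟩ : ∃ lp, (vH :: P).getLast? = some lp :=
    ⟨(vH :: P).getLast (List.cons_ne_nil _ _), List.getLast?_eq_getLast _⟩
  have harc_lp : (lp, h) ∈ N.arcs := arc_of_chain_concat (by simpa using htp.1) hlp
  have hlpt : lp ≠ t := fun e => hcon1 (by rw [hlp, e])
  obtain ⟨vH₂, P₂, Q₂, htp₂, hl1, hl2⟩ := exists_tp_lasts hphy hlpt harc_lp ht
  have hC := tp_isCycle htp (N := N)
  have hC2 := tp_isCycle htp₂ (N := N)
  have hlpC : lp ∈ cyc vH h P Q := by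
    have := mem_of_getLast?' hlp
    rcases List.mem_cons.mp this with rfl | hm
    · exact mem_cyc.mpr (by simp)
    · exact mem_cyc.mpr (by simp [hm])
  have hlpC2 : lp ∈ cyc vH₂ h P₂ Q₂ := by
    have := mem_of_getLast?' hl1
    rcases List.mem_cons.mp this with rfl | hm
    · exact mem_cyc.mpr (by simp)
    · exact mem_cyc.mpr (by simp [hm])
  have hhlp : h ≠ lp := by
    intro e
    have hndP := nodup_of_chain' (acyc hphy) htp.1
    rw [List.nodup_append'] at hndP
    exact hndP.2.2 (e ▸ mem_of_getLast?' hlp) (by simp)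
  have hCC : cyc vH h P Q = cyc vH₂ h P₂ Q₂ := by
    by_contra hCC
    have hle := hnest _ _ hC hC2 hCC
    have := two_le_inter (mem_cyc.mpr (by simp : h ∈ _)) (mem_cyc.mpr (by simp : h ∈ _))
      hlpC hlpC2 hhlp
    omega
  have htC : t ∈ vH :: h :: (P ++ Q) := by
    refine mem_cyc.mp (hCC ▸ (mem_cyc.mpr ?_) : _)
    have := mem_of_getLast?' hl2
    rcases List.mem_cons.mp this with rfl | hm
    · simp
    · simp [hm]
  rcases List.mem_cons.mp htC with rfl | htC
  · -- t = vH; both P and Q nonempty, build the cycle (vH, P, h)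
    have hPne : P ≠ [] := by
      intro e
      rw [e] at hlp
      simp only [List.getLast?_singleton, Option.some_inj] at hlp
      exact hlpt hlp.symm
    have hQne : Q ≠ [] := by
      intro e
      rw [e] at hcon2
      exact hcon2 (by simp)
    obtain ⟨q₁, Q', rfl⟩ : ∃ q₁ Q', Q = q₁ :: Q' := by
      cases Q with
      | nil => exact absurd rfl hQne
      | cons a l => exact ⟨a, l, rfl⟩
    have htp₅ : TP N t h P [] := by
      refine ⟨htp.1, ?_, ?_, Or.inl hPne⟩
      · exact List.isChain_pair.mpr ht
      · have hsub : t :: h :: (P ++ []) <+ t :: h :: (P ++ q₁ :: Q') := by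
          refine List.Sublist.cons₂ _ (List.Sublist.cons₂ _ ?_)
          simpa using (List.prefix_append P (q₁ :: Q')).sublist
        exact hnd.sublist hsub
    have hC₅ := tp_isCycle htp₅ (N := N)
    have hne : cyc t h P [] ≠ cyc t h P (q₁ :: Q') := by
      intro he
      have hq : q₁ ∈ cyc t h P (q₁ :: Q') := mem_cyc.mpr (by simp)
      rw [← he] at hq
      have hq' := mem_cyc.mp hq
      have h2 := List.nodup_cons.mp ((List.nodup_cons.mp hnd).2)
      have hq₁h : q₁ ≠ h := fun e => h2.1 (by simp [← e])
      have hq₁t : q₁ ≠ t := fun e => (List.nodup_cons.mp hnd).1 (by simp [← e])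
      have hq₁P : q₁ ∉ P := fun hin => (List.nodup_append'.mp h2.2).2.2 hin (by simp)
      rcases List.mem_cons.mp hq' with e | hq' 
      · exact hq₁t e
      rcases List.mem_cons.mp hq' with e | hq'
      · exact hq₁h e
      · exact hq₁P (by simpa using hq')
    have hle := hnest _ _ hC₅ hC hne
    have m1t : t ∈ cyc t h P [] := mem_cyc.mpr (by simp)
    have m2t : t ∈ cyc t h P (q₁ :: Q') := mem_cyc.mpr (by simp)
    have m1h : h ∈ cyc t h P [] := mem_cyc.mpr (by simp)
    have m2h : h ∈ cyc t h P (q₁ :: Q') := mem_cyc.mpr (by simp)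
    have := two_le_inter m1t m2t m1h m2h hvhh
    omega
  rcases List.mem_cons.mp htC with rfl | htC
  · exact acyc hphy t (TransGen.single ht)
  rcases List.mem_append.mp htC with htC | htC
  · exact m2_chord hphy hnest htp ht htC hcon1
  · exact m2_chord hphy hnest (tp_swap htp) ht htC hcon2

lemma reach_of_chain_mem {p : List ℕ} {s y : ℕ} (hc : List.Chain' N.ArcRel p)
    (hh : p.head? = some s) (hy : y ∈ p) : N.Reach s y := by
  cases p with
  | nil => simp at hy
  | cons a rest =>
    simp only [List.head?_cons, Option.some_inj] at hh
    subst hh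
    exact reflTransGen_of_chain' hc hy

lemma g3' (hphy : N.IsPhyloNet X) (hnest : N.OneNested) {vH h : ℕ} {P Q : List ℕ}
    (htp : TP N vH h P Q) (hsink : ∀ y, (h, y) ∈ N.arcs → N.outdeg y = 0) :
    ∀ p : List ℕ, List.Chain' N.ArcRel p → ∀ x, p.getLast? = some x →
      x ∈ vH :: (P ++ Q) → vH ∈ p ∨ (∃ y, p.head? = some y ∧ y ∈ P ++ Q) := by
  intro p
  induction p using List.reverseRecOn with
  | nil => intro _ x hx _; simp at hx
  | append_singleton l c ih =>
    intro hc x hx hmem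
    rw [List.getLast?_concat] at hx
    have hxc : x = c := Option.some_inj.mp hx.symm
    subst hxc
    rcases List.mem_cons.mp hmem with rfl | hxm
    · exact Or.inl (by simp)
    · cases l with
      | nil => exact Or.inr ⟨x, by simp, hxm⟩
      | cons a l' =>
        have hlne : (a :: l') ≠ [] := List.cons_ne_nil _ _
        obtain ⟨g, hg⟩ : ∃ g, (a :: l').getLast? = some g :=
          ⟨(a :: l').getLast hlne, List.getLast?_eq_getLast _⟩
        have harc : (g, x) ∈ N.arcs := arc_of_chain_concat hc hg
        obtain ⟨d, s', hdarc, -, hdmem, -⟩ := tp_pred_succ htp hxm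
        have hgd : g = d := m1 hphy hnest htp hsink hxm hdarc
          (by rcases List.mem_cons.mp hdmem with rfl | hd
              · exact List.mem_cons_self
              · exact List.mem_cons_of_mem _ (List.mem_cons_of_mem _ hd)) harc
        have hgm : g ∈ vH :: (P ++ Q) := hgd ▸ hdmem
        rcases ih (hc.prefix ⟨[x], rfl⟩) g hg hgm with hvH | ⟨y, hy1, hy2⟩
        · exact Or.inl (List.mem_append.mpr (Or.inl hvH))
        · refine Or.inr ⟨y, ?_, hy2⟩
          rw [← hy1]
          exact (List.head?_append_of_ne_nil _ hlne : _)

lemma g3 (hphy : N.IsPhyloNet X) (hnest : N.OneNested) {vH h : ℕ} {P Q : List ℕ}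
    (htp : TP N vH h P Q) (hsink : ∀ y, (h, y) ∈ N.arcs → N.outdeg y = 0)
    {s : ℕ} (hs : N.Reach s h) : s = h ∨ s ∈ P ++ Q ∨ N.Reach s vH := by
  obtain ⟨p, hpne, hpc, hph, hpl⟩ := exists_path_of_reflTransGen hs
  obtain ⟨l, c, hp⟩ := List.eq_nil_or_concat p |>.resolve_left hpne
  rw [List.concat_eq_append] at hp
  subst hp
  rw [List.getLast?_concat] at hpl
  have hch : c = h := Option.some_inj.mp hpl
  subst hch
  cases l with
  | nil =>
    simp only [List.nil_append, List.head?_cons, Option.some_inj] at hph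
    exact Or.inl hph.symm
  | cons a l' =>
    have hlne : (a :: l') ≠ [] := List.cons_ne_nil _ _
    obtain ⟨g, hg⟩ : ∃ g, (a :: l').getLast? = some g :=
      ⟨(a :: l').getLast hlne, List.getLast?_eq_getLast _⟩
    have harc : (g, c) ∈ N.arcs := arc_of_chain_concat hpc hg
    have hgm : g ∈ vH :: (P ++ Q) := by
      rcases m2 hphy hnest htp harc with hm | hm
      · rcases List.mem_cons.mp (mem_of_getLast?' hm) with rfl | h1
        · exact List.mem_cons_self
        · exact List.mem_cons_of_mem _ (List.mem_append.mpr (Or.inl h1))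
      · rcases List.mem_cons.mp (mem_of_getLast?' hm) with rfl | h1
        · exact List.mem_cons_self
        · exact List.mem_cons_of_mem _ (List.mem_append.mpr (Or.inr h1))
    have hph' : (a :: l').head? = some s := by
      rw [← hph]
      exact ((List.head?_append_of_ne_nil _ hlne : _)).symm
    rcases g3' hphy hnest htp hsink (a :: l') (hpc.prefix ⟨[c], rfl⟩) g hg hgm with hvH | ⟨y, hy1, hy2⟩
    · exact Or.inr (Or.inr (reach_of_chain_mem (hpc.prefix ⟨[c], rfl⟩) hph' hvH))
    · rw [hph'] at hy1
      have : y = s := Option.some_inj.mp hy1.symm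
      exact Or.inr (Or.inl (this ▸ hy2))

section NoCherry
variable (hphy : N.IsPhyloNet X)
include hphy

lemma leaf_iff {v : ℕ} (hv : v ∈ N.verts) : N.IsLeaf v ↔ v ∈ X :=
  hphy.2.2.2.2.2.2.1 v hv

lemma sink_is_leaf {v : ℕ} (hv : v ∈ N.verts) (hvr : v ≠ N.root) (hout : N.outdeg v = 0) :
    v ∈ X := by
  have hind : N.indeg v ≠ 0 := fun h0 => hvr (hphy.2.2.2.2.1 v hv h0)
  by_cases h1 : N.indeg v = 1
  · exact (leaf_iff hphy hv).mp ⟨h1, hout⟩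
  · have h2 : 2 ≤ N.indeg v := by omega
    have := hphy.2.2.2.2.2.2.2.2 v hv h2
    omega

lemma exists_min_active {w : ℕ} (hw : w ∈ N.verts) (hout : 1 ≤ N.outdeg w) :
    ∃ m ∈ N.verts, N.Reach w m ∧ 1 ≤ N.outdeg m ∧
      ∀ v, Relation.TransGen N.ArcRel m v → N.outdeg v = 0 := by
  have key : ∀ n, ∀ w ∈ N.verts, 1 ≤ N.outdeg w →
      (N.verts.filter fun u => N.Reach w u).card ≤ n →
      ∃ m ∈ N.verts, N.Reach w m ∧ 1 ≤ N.outdeg m ∧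
        ∀ v, Relation.TransGen N.ArcRel m v → N.outdeg v = 0 := by
    intro n
    induction n with
    | zero =>
      intro w hw _ hc
      exact absurd (Nat.le_zero.mp hc)
        (Finset.card_ne_zero_of_mem (Finset.mem_filter.mpr ⟨hw, ReflTransGen.refl⟩))
    | succ n ih =>
      intro w hw how hc
      by_cases hall : ∀ v, Relation.TransGen N.ArcRel w v → N.outdeg v = 0
      · exact ⟨w, hw, ReflTransGen.refl, how, hall⟩
      · push_neg at hall
        obtain ⟨v, htv, hov⟩ := hall
        have hov' : 1 ≤ N.outdeg v := Nat.pos_of_ne_zero hov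
        obtain ⟨p, hp⟩ := Finset.card_pos.mp hov'
        obtain ⟨hp1, hp2⟩ := Finset.mem_filter.mp hp
        have hv : v ∈ N.verts := arc_mem_left hphy (mem_arcs_of_fst hp1 hp2)
        have hsub : (N.verts.filter fun u => N.Reach v u) ⊆
            (N.verts.filter fun u => N.Reach w u) := by
          intro u hu
          obtain ⟨hu1, hu2⟩ := Finset.mem_filter.mp hu
          exact Finset.mem_filter.mpr ⟨hu1, Relation.ReflTransGen.trans htv.to_reflTransGen hu2⟩
        have hwn : w ∉ (N.verts.filter fun u => N.Reach v u) := by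
          intro hwm
          exact acyc hphy w (Relation.TransGen.trans_left htv
            ((Finset.mem_filter.mp hwm).2))
        have hlt : (N.verts.filter fun u => N.Reach v u).card ≤ n := by
          have := Finset.card_lt_card (Finset.ssubset_iff_of_subset hsub |>.mpr
            ⟨w, Finset.mem_filter.mpr ⟨hw, ReflTransGen.refl⟩, hwn⟩)
          omega
        obtain ⟨m, hm, hrm, hom, hsink⟩ := ih v hv (by omega) hlt
        exact ⟨m, hm, Relation.ReflTransGen.trans htv.to_reflTransGen hrm, hom, hsink⟩
  exact key _ w hw hout le_rfl

variable (hnc : ¬ ∃ S, N.IsCherry X S)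
include hnc

lemma leaf_child_unique {v x y : ℕ} (hv : v ∈ N.verts) (hx : x ∈ X) (hy : y ∈ X)
    (hax : (v, x) ∈ N.arcs) (hay : (v, y) ∈ N.arcs) : x = y := by
  by_contra hne
  apply hnc
  refine ⟨X.filter (fun z => (v, z) ∈ N.arcs), ?_, Finset.filter_subset _ _, v, hv, ?_, ?_⟩
  · have hsub : ({x, y} : Finset ℕ) ⊆ X.filter (fun z => (v, z) ∈ N.arcs) := by
      intro z hz
      rcases Finset.mem_insert.mp hz with rfl | hz
      · exact Finset.mem_filter.mpr ⟨hx, hax⟩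
      · rw [Finset.mem_singleton.mp hz]
        exact Finset.mem_filter.mpr ⟨hy, hay⟩
    calc 2 = ({x, y} : Finset ℕ).card := (Finset.card_pair hne).symm
      _ ≤ _ := Finset.card_le_card hsub
  · intro z hz
    exact (Finset.mem_filter.mp hz).2
  · intro z hzX hzS
    intro harc
    exact hzS (Finset.mem_filter.mpr ⟨hzX, harc⟩)

lemma exists_good_hybrid (hX : 2 ≤ X.card) {w : ℕ} (hw : w ∈ N.verts)
    (hout : 1 ≤ N.outdeg w) :
    ∃ h ∈ N.verts, N.Reach w h ∧ N.outdeg h = 1 ∧ 2 ≤ N.indeg h ∧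
      (∃ z ∈ X, (h, z) ∈ N.arcs) ∧ (∀ y, (h, y) ∈ N.arcs → N.outdeg y = 0) := by
  obtain ⟨m, hm, hrm, hom, hsink⟩ := exists_min_active hphy hw hout
  have hsink' : ∀ y, (m, y) ∈ N.arcs → N.outdeg y = 0 :=
    fun y hy => hsink y (TransGen.single hy)
  have hchild : ∀ y, (m, y) ∈ N.arcs → y ∈ X := by
    intro y hy
    have hyv := arc_mem_right hphy hy
    have hyr : y ≠ N.root := by
      intro e
      have h1 := indeg_pos hy
      rw [e, hphy.2.2.2.1] at h1
      omega
    exact sink_is_leaf hphy hyv hyr (hsink' y hy)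
  obtain ⟨p, hp⟩ := Finset.card_pos.mp hom
  obtain ⟨hp1, hp2⟩ := Finset.mem_filter.mp hp
  have hzarc : (m, p.2) ∈ N.arcs := mem_arcs_of_fst hp1 hp2
  set z := p.2 with hzdef
  have hz : z ∈ X := hchild z hzarc
  have hout1 : N.outdeg m = 1 := outdeg_eq_one hzarc
    (fun b hb => leaf_child_unique hphy hnc hm (hchild b hb) hz hb hzarc)
  have hzsink : N.outdeg z = 0 := hsink' z hzarc
  have hmroot : m ≠ N.root := by
    intro e
    obtain ⟨x, hxX, hxz⟩ := Finset.exists_mem_ne (s := X) (by omega) z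
    have hxv : x ∈ N.verts := hphy.2.2.2.2.2.1 hxX
    have hleaf : N.IsLeaf x := (leaf_iff hphy hxv).mpr hxX
    have hxr : x ≠ N.root := by
      intro e2
      have := hleaf.1
      rw [e2, hphy.2.2.2.1] at this
      omega
    have htg : Relation.TransGen N.ArcRel N.root x :=
      transGen_of_reach_ne hphy (root_reach hphy x hxv) (Ne.symm hxr)
    rw [← e] at htg
    obtain ⟨c, harc, hrest⟩ := Relation.TransGen.head'_iff.mp htg
    have hcz : c = z := outdeg_unique (le_of_eq hout1) harc hzarc
    subst hcz
    rcases Relation.ReflTransGen.cases_head hrest with rfl | ⟨c', harc', -⟩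
    · exact hxz rfl
    · have := outdeg_pos harc'
      omega
  have hind : 2 ≤ N.indeg m := by
    have hind0 : N.indeg m ≠ 0 := fun h0 => hmroot (hphy.2.2.2.2.1 m hm h0)
    by_cases h1 : N.indeg m = 1
    · have := hphy.2.2.2.2.2.2.2.1 m hm hmroot (by omega) h1
      omega
    · omega
  exact ⟨m, hm, hrm, hout1, hind, ⟨z, hz, hzarc⟩, hsink'⟩

lemma root_outdeg_pos (hX : 2 ≤ X.card) : 1 ≤ N.outdeg N.root := by
  obtain ⟨x, hxX⟩ := Finset.card_pos.mp (by omega : 0 < X.card)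
  have hxv : x ∈ N.verts := hphy.2.2.2.2.2.1 hxX
  have hleaf : N.IsLeaf x := (leaf_iff hphy hxv).mpr hxX
  have hxr : x ≠ N.root := by
    intro e2
    have := hleaf.1
    rw [e2, hphy.2.2.2.1] at this
    omega
  have htg : Relation.TransGen N.ArcRel N.root x :=
    transGen_of_reach_ne hphy (root_reach hphy x hxv) (Ne.symm hxr)
  obtain ⟨c, harc, -⟩ := Relation.TransGen.head'_iff.mp htg
  exact outdeg_pos harc

end NoCherry

/-- The set of descendants of `v` (inside `verts`). -/
def desc (N : Net) (v : ℕ) : Finset ℕ := N.verts.filter fun u => N.Reach v u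

/-- Candidate split vertices: split vertices of cycles whose hybrid has outdegree one,
indegree at least two, a leaf child, and only sink children. -/
def TSet (N : Net) (X : Finset ℕ) : Finset ℕ :=
  N.verts.filter fun v => ∃ h P Q, TP N v h P Q ∧ N.outdeg h = 1 ∧ 2 ≤ N.indeg h ∧
    (∃ z ∈ X, (h, z) ∈ N.arcs) ∧ (∀ y, (h, y) ∈ N.arcs → N.outdeg y = 0)

lemma measure_lt (hphy : N.IsPhyloNet X) {vH v' : ℕ} (hv : vH ∈ N.verts)
    (hreach : ∀ x, N.Reach v' x → N.Reach vH x) (hnr : ¬ N.Reach v' vH) :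
    (desc N v').card < (desc N vH).card := by
  refine Finset.card_lt_card (Finset.ssubset_iff_of_subset ?_ |>.mpr ?_)
  · intro x hx
    obtain ⟨hx1, hx2⟩ := Finset.mem_filter.mp hx
    exact Finset.mem_filter.mpr ⟨hx1, hreach x hx2⟩
  · exact ⟨vH, Finset.mem_filter.mpr ⟨hv, ReflTransGen.refl⟩,
      fun hm => hnr (Finset.mem_filter.mp hm).2⟩

lemma two_out_arcs {v : ℕ} (h2 : 2 ≤ N.outdeg v) :
    ∃ a b : ℕ, a ≠ b ∧ (v, a) ∈ N.arcs ∧ (v, b) ∈ N.arcs := by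
  obtain ⟨p, hp, q, hq, hpq⟩ := Finset.one_lt_card.mp h2
  obtain ⟨hp1, hp2⟩ := Finset.mem_filter.mp hp
  obtain ⟨hq1, hq2⟩ := Finset.mem_filter.mp hq
  exact ⟨p.2, q.2, fun h => hpq (Prod.ext (hp2.trans hq2.symm) h),
    mem_arcs_of_fst hp1 hp2, mem_arcs_of_fst hq1 hq2⟩

lemma mem_list_of_mem_tail {vH : ℕ} (h : ℕ) {P Q : List ℕ} {d : ℕ}
    (hd : d ∈ vH :: (P ++ Q)) : d ∈ vH :: h :: (P ++ Q) := by
  rcases List.mem_cons.mp hd with rfl | hd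
  · exact List.mem_cons_self
  · exact List.mem_cons_of_mem _ (List.mem_cons_of_mem _ hd)

lemma cyc_eq_of_common_interior (hphy : N.IsPhyloNet X) (hnest : N.OneNested)
    {vH h : ℕ} {P Q : List ℕ} (htp : TP N vH h P Q)
    {vH' h' : ℕ} {P' Q' : List ℕ} (htp' : TP N vH' h' P' Q')
    (hsink' : ∀ y, (h', y) ∈ N.arcs → N.outdeg y = 0)
    {u : ℕ} (hu : u ∈ P ++ Q) (hu' : u ∈ P' ++ Q') :
    cyc vH h P Q = cyc vH' h' P' Q' := by
  obtain ⟨d, s, hd, hs, hdm, -⟩ := tp_pred_succ htp hu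
  obtain ⟨d', s', hd', hs', hdm', -⟩ := tp_pred_succ htp' hu'
  have hdd : d = d' := m1 hphy hnest htp' hsink' hu' hd' (mem_list_of_mem_tail h' hdm') hd
  have hdu : d ≠ u := fun e => acyc hphy u (TransGen.single (e ▸ hd))
  by_contra hne
  have hle := hnest _ _ (tp_isCycle htp (N := N)) (tp_isCycle htp' (N := N)) hne
  have h2 := two_le_inter (mem_cyc.mpr (by simp [hu] : u ∈ _))
    (mem_cyc.mpr (by simp [hu'] : u ∈ _))
    (mem_cyc.mpr (mem_list_of_mem_tail h hdm))
    (mem_cyc.mpr (hdd ▸ mem_list_of_mem_tail h' hdm')) (fun e => hdu e.symm)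
  omega

lemma pendant_is_leaf (hphy : N.IsPhyloNet X) (hnest : N.OneNested)
    (hnc : ¬ ∃ S, N.IsCherry X S) (hX : 2 ≤ X.card)
    {vH h : ℕ} {P Q : List ℕ} (htp : TP N vH h P Q)
    (hmin : ∀ v ∈ TSet N X, (desc N vH).card ≤ (desc N v).card)
    {u w : ℕ} (hu : u ∈ P ++ Q) (huw : (u, w) ∈ N.arcs)
    (hwC : w ∉ vH :: h :: (P ++ Q)) : w ∈ X := by
  by_contra hwX
  have hwv : w ∈ N.verts := arc_mem_right hphy huw
  have hvHv : vH ∈ N.verts := by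
    obtain ⟨c, hc, -⟩ := tp_first_arc htp
    exact arc_mem_left hphy hc
  have hreach_vH_u : N.Reach vH u := tp_reach htp (List.mem_cons_of_mem _ hu)
  have hreach_vH_w : N.Reach vH w := hreach_vH_u.tail huw
  have hnwvH : ¬ N.Reach w vH := by
    intro hr
    have : vH = w := reach_asym hphy hreach_vH_w hr
    exact hwC (this ▸ List.mem_cons_self)
  -- w is not a sink
  have hwout : 1 ≤ N.outdeg w := by
    rcases Nat.eq_zero_or_pos (N.outdeg w) with h0 | h1
    · have hwr : w ≠ N.root := by
        intro e
        have := indeg_pos huw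
        rw [e, hphy.2.2.2.1] at this
        omega
      exact absurd (sink_is_leaf hphy hwv hwr h0) hwX
    · exact h1
  obtain ⟨h', hh'v, hwh', hh'out, hh'ind, hh'z, hh'sink⟩ :=
    exists_good_hybrid hphy hnc hX hwv hwout
  obtain ⟨a, b, hab, ha, hb⟩ := two_in_arcs hh'ind
  obtain ⟨vH', P', Q', htp', hl1', hl2'⟩ := exists_tp_lasts hphy hab ha hb
  have hvH'v : vH' ∈ N.verts := by
    obtain ⟨c, hc, -⟩ := tp_first_arc htp'
    exact arc_mem_left hphy hc
  have hvH'T : vH' ∈ TSet N X :=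
    Finset.mem_filter.mpr ⟨hvH'v, h', P', Q', htp', hh'out, hh'ind, hh'z, hh'sink⟩
  have hminlt : (desc N vH').card < (desc N vH).card → False := by
    intro hlt
    exact absurd (hmin vH' hvH'T) (by omega)
  have huvH : u ≠ vH := by
    intro e
    have hnd := htp.2.2.1
    exact (List.nodup_cons.mp hnd).1 (by
      subst e
      exact List.mem_cons_of_mem _ hu)
  have hcase_vH' : u = vH' → False := by
    intro he
    apply hminlt
    refine measure_lt hphy hvHv ?_ ?_
    · intro x hx
      exact hreach_vH_u.trans (he ▸ hx)
    · intro hr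
      have hr' : N.Reach u vH := he ▸ hr
      exact acyc hphy u (Relation.TransGen.trans_left
        (transGen_of_reach_ne hphy hr' huvH) hreach_vH_u)
  have hcase_int : u ∈ P' ++ Q' → w ∈ vH' :: h' :: (P' ++ Q') → False := by
    intro hu' hw'
    have hceq := cyc_eq_of_common_interior hphy hnest htp htp' hh'sink hu hu'
    have : w ∈ cyc vH h P Q := hceq ▸ mem_cyc.mpr hw'
    exact hwC (mem_cyc.mp this)
  rcases g3 hphy hnest htp' hh'sink hwh' with rfl | hw' | hwr
  · -- w = h'
    have harc : (u, w) ∈ N.arcs := huw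
    rcases m2 hphy hnest htp' harc with hm | hm
    · rcases List.mem_cons.mp (mem_of_getLast?' hm) with he | hu'
      · exact hcase_vH' he
      · exact hcase_int (List.mem_append.mpr (Or.inl hu'))
          (List.mem_cons_of_mem _ (List.mem_cons_self))
    · rcases List.mem_cons.mp (mem_of_getLast?' hm) with he | hu'
      · exact hcase_vH' he
      · exact hcase_int (List.mem_append.mpr (Or.inr hu'))
          (List.mem_cons_of_mem _ (List.mem_cons_self))
  · -- w interior of the new cycle
    obtain ⟨dw, sw, hdw, hsw, hdwm, -⟩ := tp_pred_succ htp' hw'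
    have hudw : u = dw := m1 hphy hnest htp' hh'sink hw' hdw
      (mem_list_of_mem_tail h' hdwm) huw
    rcases List.mem_cons.mp (hudw ▸ hdwm) with he | hu'
    · exact hcase_vH' he
    · exact hcase_int hu'
        (List.mem_cons_of_mem _ (List.mem_cons_of_mem _ hw'))
  · -- Reach w vH'
    apply hminlt
    refine measure_lt hphy hvHv ?_ ?_
    · intro x hx
      exact hreach_vH_w.trans (hwr.trans hx)
    · intro hr
      exact hnwvH (hwr.trans hr)

lemma interior_structure (hphy : N.IsPhyloNet X) (hnest : N.OneNested)
    (hnc : ¬ ∃ S, N.IsCherry X S) (hX : 2 ≤ X.card)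
    {vH h : ℕ} {P Q : List ℕ} (htp : TP N vH h P Q)
    (hout1 : N.outdeg h = 1)
    (hsink : ∀ y, (h, y) ∈ N.arcs → N.outdeg y = 0)
    (hmin : ∀ v ∈ TSet N X, (desc N vH).card ≤ (desc N v).card)
    {u : ℕ} (hu : u ∈ P) :
    N.indeg u = 1 ∧ N.outdeg u = 2 ∧ ∃ x, x ∈ X ∧ (u, x) ∈ N.arcs := by
  obtain ⟨d, s, l₁, l₂, hsplit, hd, hs, hdP, hsm⟩ := side_split htp hu
  have huu : u ∈ P ++ Q := List.mem_append.mpr (Or.inl hu)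
  have hnd := htp.2.2.1
  have hndPQ : (P ++ Q).Nodup := (List.nodup_cons.mp ((List.nodup_cons.mp hnd).2)).2
  have huvH : u ≠ vH := by
    intro e
    exact (List.nodup_cons.mp hnd).1 (by
      subst e
      exact List.mem_cons_of_mem _ huu)
  have hdC : d ∈ vH :: h :: (P ++ Q) := by
    rcases List.mem_cons.mp hdP with rfl | hdP
    · exact List.mem_cons_self
    · exact List.mem_cons_of_mem _ (List.mem_cons_of_mem _
        (List.mem_append.mpr (Or.inl hdP)))
  have hind : N.indeg u = 1 :=
    indeg_eq_one hd (fun b hb => m1 hphy hnest htp hsink huu hd hdC hb)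
  have huv : u ∈ N.verts := arc_mem_right hphy hd
  have hur : u ≠ N.root := by
    intro e
    have h0 := hphy.2.2.2.1
    rw [← e] at h0
    omega
  have hou2 : 2 ≤ N.outdeg u :=
    hphy.2.2.2.2.2.2.2.1 u huv hur (by have := outdeg_pos hs; omega) hind
  have hnodP : (vH :: P ++ [h]).Nodup := nodup_of_chain' (acyc hphy) htp.1
  have hsX : s ∉ X := by
    intro hsX
    have hsv : s ∈ N.verts := arc_mem_right hphy hs
    have hsleaf := (leaf_iff hphy hsv).mpr hsX
    rcases hsm with hsP | rfl
    · obtain ⟨d2, s2, -, hs2, -, -⟩ := tp_pred_succ htp (List.mem_append.mpr (Or.inl hsP))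
      have := outdeg_pos hs2
      have := hsleaf.2
      omega
    · have := hsleaf.2
      omega
  have hsplit1 : vH :: P ++ [h] = (l₁ ++ [d]) ++ u :: s :: l₂ := by
    rw [hsplit]; simp
  have hclass : ∀ y, (u, y) ∈ N.arcs → y = s ∨ y ∈ X := by
    intro y hy
    by_cases hyC : y ∈ vH :: h :: (P ++ Q)
    · rcases List.mem_cons.mp hyC with rfl | hyC
      · -- y = vH : contradiction with acyclicity
        exfalso
        exact acyc hphy u (Relation.TransGen.trans_left (TransGen.single hy)
          (tp_reach htp (List.mem_cons_of_mem _ huu)))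
      · rcases List.mem_cons.mp hyC with rfl | hyC
        · -- y = h
          rcases m2 hphy hnest htp hy with hm | hm
          · have he : (vH :: P).dropLast ++ [u] = vH :: P :=
              List.dropLast_append_getLast? u (by rw [Option.mem_def, hm])
            have hsplit2 : vH :: P ++ [y] = (vH :: P).dropLast ++ u :: y :: [] := by
              conv_lhs => rw [show vH :: P ++ [y] = (vH :: P) ++ [y] from by simp, ← he]
              simp
            exact Or.inl (succ_unique hnodP hsplit1 hsplit2).symm
          · exfalso
            rcases List.mem_cons.mp (mem_of_getLast?' hm) with he | huQ
            · exact huvH he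
            · exact (List.nodup_append'.mp hndPQ).2.2 hu huQ
        · rcases List.mem_append.mp hyC with hyP | hyQ
          · -- y ∈ P
            obtain ⟨dy, sy, m₁, m₂, hsplity, hdy, -, hdyP, -⟩ := side_split htp hyP
            have hudy : u = dy := m1 hphy hnest htp hsink
              (List.mem_append.mpr (Or.inl hyP)) hdy
              (by rcases List.mem_cons.mp hdyP with rfl | hdyP
                  · exact List.mem_cons_self
                  · exact List.mem_cons_of_mem _ (List.mem_cons_of_mem _
                      (List.mem_append.mpr (Or.inl hdyP)))) hy
            have hsplity' : vH :: P ++ [h] = m₁ ++ u :: y :: (sy :: m₂) := by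
              rw [hsplity, ← hudy]
            exact Or.inl (succ_unique hnodP hsplit1 hsplity').symm
          · -- y ∈ Q : impossible
            exfalso
            obtain ⟨dy, sy, m₁, m₂, -, hdy, -, hdyQ, -⟩ := side_split (tp_swap htp) hyQ
            have hudy : u = dy := m1 hphy hnest htp hsink
              (List.mem_append.mpr (Or.inr hyQ)) hdy
              (by rcases List.mem_cons.mp hdyQ with rfl | hdyQ
                  · exact List.mem_cons_self
                  · exact List.mem_cons_of_mem _ (List.mem_cons_of_mem _
                      (List.mem_append.mpr (Or.inr hdyQ)))) hy
            rcases List.mem_cons.mp (hudy ▸ hdyQ) with he | huQ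
            · exact huvH he
            · exact (List.nodup_append'.mp hndPQ).2.2 hu huQ
    · exact Or.inr (pendant_is_leaf hphy hnest hnc hX htp hmin huu hy hyC)
  obtain ⟨y₁, y₂, hy12, hay1, hay2⟩ := two_out_arcs hou2
  have hx : ∃ x, x ∈ X ∧ (u, x) ∈ N.arcs := by
    rcases hclass y₁ hay1 with rfl | h1
    · rcases hclass y₂ hay2 with rfl | h2
      · exact absurd rfl hy12
      · exact ⟨y₂, h2, hay2⟩
    · exact ⟨y₁, h1, hay1⟩
  obtain ⟨x, hxX, hxa⟩ := hx
  have hsx : s ≠ x := fun e => hsX (e ▸ hxX)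
  have hout2 : N.outdeg u = 2 := outdeg_eq_two hs hxa hsx (fun y hy => by
    rcases hclass y hy with h1 | h1
    · exact Or.inl h1
    · exact Or.inr (leaf_child_unique hphy hnc huv h1 hxX hy hxa))
  exact ⟨hind, hout2, x, hxX, hxa⟩

lemma build_cactus (hphy : N.IsPhyloNet X) (hnest : N.OneNested)
    (hnc : ¬ ∃ S, N.IsCherry X S) (hX : 2 ≤ X.card)
    {vH h : ℕ} {P Q : List ℕ} (htp : TP N vH h P Q) (hPne : P ≠ [])
    (hout1 : N.outdeg h = 1) (hz : ∃ z ∈ X, (h, z) ∈ N.arcs)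
    (hsink : ∀ y, (h, y) ∈ N.arcs → N.outdeg y = 0)
    (hmin : ∀ v ∈ TSet N X, (desc N vH).card ≤ (desc N v).card) :
    ∃ A B z', N.IsCactus X A B z' vH h := by
  obtain ⟨z, hzX, hzarc⟩ := hz
  classical
  set f : ℕ → ℕ := fun u => if hx : ∃ x, x ∈ X ∧ (u, x) ∈ N.arcs then hx.choose else 0
    with hf
  have hstruct : ∀ u ∈ P ++ Q,
      N.indeg u = 1 ∧ N.outdeg u = 2 ∧ ∃ x, x ∈ X ∧ (u, x) ∈ N.arcs := by
    intro u hu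
    rcases List.mem_append.mp hu with huP | huQ
    · exact interior_structure hphy hnest hnc hX htp hout1 hsink hmin huP
    · exact interior_structure hphy hnest hnc hX (tp_swap htp) hout1 hsink hmin huQ
  have hfspec : ∀ u ∈ P ++ Q, f u ∈ X ∧ (u, f u) ∈ N.arcs := by
    intro u hu
    obtain ⟨-, -, x, hx⟩ := hstruct u hu
    have hex : ∃ x, x ∈ X ∧ (u, x) ∈ N.arcs := ⟨x, hx⟩
    rw [hf]
    simp only [dif_pos hex]
    exact hex.choose_spec
  have hinj : ∀ u ∈ P ++ Q, ∀ v ∈ P ++ Q, f u = f v → u = v := by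
    intro u hu v hv he
    have h1 := hfspec u hu
    have h2 := hfspec v hv
    have hleaf : N.IsLeaf (f u) := (leaf_iff hphy (arc_mem_right hphy h1.2)).mpr h1.1
    exact indeg_unique (le_of_eq hleaf.1) h1.2 (he ▸ h2.2)
  have hnd := htp.2.2.1
  have hndPQ : (P ++ Q).Nodup := (List.nodup_cons.mp ((List.nodup_cons.mp hnd).2)).2
  have hhPQ : h ∉ P ++ Q := (List.nodup_cons.mp ((List.nodup_cons.mp hnd).2)).1
  have hmap : (P ++ Q).map f = P.map f ++ Q.map f := List.map_append
  refine ⟨P.map f, Q.map f, z, P, Q, ?_, ?_, ?_, by simp, by simp, htp.1, htp.2.1, hnd,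
    ?_, hout1, hzarc, ?_, ?_, ?_⟩
  · simpa using hPne
  · -- Nodup (P.map f ++ Q.map f ++ [z])
    have hmnd : ((P ++ Q).map f).Nodup := hndPQ.map_on hinj
    have hznot : z ∉ (P ++ Q).map f := by
      intro hzm
      obtain ⟨u, hu, hzu⟩ := List.mem_map.mp hzm
      have hsp := hfspec u hu
      have hleafz : N.IsLeaf z := (leaf_iff hphy (arc_mem_right hphy hzarc)).mpr hzX
      have hhu : h = u := indeg_unique (le_of_eq hleafz.1) hzarc (hzu ▸ hsp.2)
      exact hhPQ (hhu ▸ hu)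
    rw [← hmap]
    refine List.nodup_append'.mpr ⟨hmnd, List.nodup_singleton z, ?_⟩
    intro x hx hx2
    simp only [List.mem_singleton] at hx2
    subst hx2
    exact hznot hx
  · intro x hx
    rcases List.mem_append.mp hx with hx | hx
    · rw [← hmap] at hx
      obtain ⟨u, hu, rfl⟩ := List.mem_map.mp hx
      exact (hfspec u hu).1
    · simp only [List.mem_singleton] at hx
      exact hx ▸ hzX
  · -- all cycle vertices in verts
    intro x hx
    rcases List.mem_cons.mp hx with rfl | hx
    · exact chain_mem_verts hphy htp.1 (by simp) x (by simp)
    · rcases List.mem_cons.mp hx with rfl | hx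
      · exact chain_mem_verts hphy htp.1 (by simp) x (by simp)
      · rcases List.mem_append.mp hx with hx | hx
        · exact chain_mem_verts hphy htp.1 (by simp) x (by simp [hx])
        · exact chain_mem_verts hphy htp.2.1 (by simp) x (by simp [hx])
  · -- zip P
    intro pr hpr
    have hz' : P.zip (P.map f) = P.map (fun a => (a, f a)) := by
      simpa using List.zip_map' (f := id) (g := f) (l := P)
    rw [hz'] at hpr
    obtain ⟨a, ha, rfl⟩ := List.mem_map.mp hpr
    exact (hfspec a (List.mem_append.mpr (Or.inl ha))).2
  · -- zip Q
    intro pr hpr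
    have hz' : Q.zip (Q.map f) = Q.map (fun a => (a, f a)) := by
      simpa using List.zip_map' (f := id) (g := f) (l := Q)
    rw [hz'] at hpr
    obtain ⟨a, ha, rfl⟩ := List.mem_map.mp hpr
    exact (hfspec a (List.mem_append.mpr (Or.inr ha))).2
  · intro u hu
    exact ⟨(hstruct u hu).1, (hstruct u hu).2.1⟩

end CactusAux

/-- Proposition 3, first part: every 1-nested phylogenetic network
on `X`, `|X| ≥ 2`, admits at least one of the four reductions, i.e. it has a cherry
(isolated or not) or a cactus (isolated or not). -/
theorem cherry_or_cactus_exists (N : Net) (X : Finset ℕ)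
    (hphy : N.IsPhyloNet X) (hnest : N.OneNested) (hX : 2 ≤ X.card) :
    (∃ S : Finset ℕ, N.IsCherry X S) ∨
      (∃ A B : List ℕ, ∃ z vH h : ℕ, N.IsCactus X A B z vH h) := by
  classical
  by_cases hch : ∃ S : Finset ℕ, N.IsCherry X S
  · exact Or.inl hch
  · right
    have hroot : N.root ∈ N.verts := hphy.2.2.1
    have hrout := CactusAux.root_outdeg_pos hphy hch hX
    obtain ⟨h₀, hh₀v, -, hh₀out, hh₀ind, hh₀z, hh₀sink⟩ :=
      CactusAux.exists_good_hybrid hphy hch hX hroot hrout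
    obtain ⟨a, b, hab, ha, hb⟩ := CactusAux.two_in_arcs hh₀ind
    obtain ⟨vH₁, P₁, Q₁, htp₁, -, -⟩ := CactusAux.exists_tp_lasts hphy hab ha hb
    have hvH₁v : vH₁ ∈ N.verts := by
      obtain ⟨c, hc, -⟩ := CactusAux.tp_first_arc htp₁
      exact CactusAux.arc_mem_left hphy hc
    have hTne : (CactusAux.TSet N X).Nonempty :=
      ⟨vH₁, Finset.mem_filter.mpr ⟨hvH₁v, h₀, P₁, Q₁, htp₁, hh₀out, hh₀ind, hh₀z, hh₀sink⟩⟩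
    obtain ⟨vH₀, hvH₀T, hmin⟩ :=
      Finset.exists_min_image (CactusAux.TSet N X) (fun v => (CactusAux.desc N v).card) hTne
    obtain ⟨-, h₀', P₀, Q₀, htp₀, ho1, hi2, hz0, hs0⟩ := Finset.mem_filter.mp hvH₀T
    rcases htp₀.2.2.2 with hP | hQ
    · obtain ⟨A, B, z', hc⟩ :=
        CactusAux.build_cactus hphy hnest hch hX htp₀ hP ho1 hz0 hs0 hmin
      exact ⟨A, B, z', vH₀, h₀', hc⟩
    · obtain ⟨A, B, z', hc⟩ :=
        CactusAux.build_cactus hphy hnest hch hX (CactusAux.tp_swap htp₀) hQ ho1 hz0 hs0 hmin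
      exact ⟨A, B, z', vH₀, h₀', hc⟩
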